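/- arXiv:2003.01759 — 2 statements merged into one kernel-verified Lean document; each statement's English description precedes it below -/
import Mathlib

section
/- Let G : ℝ^d → Y be continuously Fréchet differentiable, K ⊂ Y a nonempty closed convex cone, and x ∈ ℝ^d satisfy G(x) ∈ K. Then 𝒩(x) ⊆ ({ h ∈ ℝ^d : DG(x)h ∈ T_K(G(x)) })*, where C* denotes the polar cone of a cone C ⊆ ℝ^d. Moreover, if the weakened Robinson constraint qualification 0 ∈ int{ G(x) + DG(x)(ℝ^d) − K } holds at x, then the opposite inclusion also holds and 𝒩(x) = (T_Ξ(x))* = N_Ξ(x), where Ξ = { z ∈ ℝ^d : G(z) ∈ K }. -/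
open Set Filter Topology Pointwise
open scoped RealInnerProductSpace

noncomputable section

/-- The contingent (Bouligand tangent) cone to a set `C` at a point `x`. -/
def contingentCone {X : Type*} [NormedAddCommGroup X] [NormedSpace ℝ X]
    (C : Set X) (x : X) : Set X :=
  {h | ∃ (a : ℕ → ℝ) (v : ℕ → X), (∀ n, 0 < a n) ∧
    Tendsto a atTop (𝓝 0) ∧ Tendsto v atTop (𝓝 h) ∧ ∀ n, x + a n • v n ∈ C}

/-- Robinson's constraint qualification at a feasible point `x`. -/
def RobinsonCQ {d : ℕ} {Y : Type*} [NormedAddCommGroup Y] [NormedSpace ℝ Y]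
    (G : EuclideanSpace ℝ (Fin d) → Y) (K : Set Y)
    (A : Set (EuclideanSpace ℝ (Fin d))) (x : EuclideanSpace ℝ (Fin d)) : Prop :=
  (0 : Y) ∈ interior {y | ∃ a ∈ A, ∃ k ∈ K, y = G x + fderiv ℝ G x (a - x) - k}

variable {d : ℕ} {W : Type*} [TopologicalSpace W]
variable {Y : Type*} [NormedAddCommGroup Y] [NormedSpace ℝ Y]

/-- `F(x) = max_{ω ∈ W} f(x, ω)` (as a supremum). -/
def Fmax (f : EuclideanSpace ℝ (Fin d) → W → ℝ) (x : EuclideanSpace ℝ (Fin d)) : ℝ :=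
  sSup (range fun ω => f x ω)

/-- `W(x) = {ω ∈ W | f(x, ω) = F(x)}`, the set of active indices. -/
def activeSet (f : EuclideanSpace ℝ (Fin d) → W → ℝ) (x : EuclideanSpace ℝ (Fin d)) : Set W :=
  {ω | f x ω = Fmax f x}

/-- The set of active gradients `{∇ₓ f(x, ω) | ω ∈ W(x)}`. -/
def activeGrads (f : EuclideanSpace ℝ (Fin d) → W → ℝ) (x : EuclideanSpace ℝ (Fin d)) :
    Set (EuclideanSpace ℝ (Fin d)) :=
  (fun ω => gradient (fun z => f z ω) x) '' activeSet f x

/-- The directional derivative `F'(x, h) = max_{ω ∈ W(x)} ⟨∇ₓ f(x, ω), h⟩` of the max-function. -/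
def Fdir (f : EuclideanSpace ℝ (Fin d) → W → ℝ) (x h : EuclideanSpace ℝ (Fin d)) : ℝ :=
  sSup ((fun v => ⟪v, h⟫) '' activeGrads f x)

/-- The Hadamard subdifferential `∂F(x) = co {∇ₓ f(x, ω) | ω ∈ W(x)}` of the max-function. -/
def subdiffF (f : EuclideanSpace ℝ (Fin d) → W → ℝ) (x : EuclideanSpace ℝ (Fin d)) :
    Set (EuclideanSpace ℝ (Fin d)) :=
  convexHull ℝ (activeGrads f x)

/-- The polar cone of a set in `ℝ^d`. -/
def polarCone {d : ℕ} (C : Set (EuclideanSpace ℝ (Fin d))) : Set (EuclideanSpace ℝ (Fin d)) :=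
  {v | ∀ h ∈ C, ⟪v, h⟫ ≤ 0}

/-- The normal cone `N_A(x)` to `A` at `x`, i.e. the polar of the contingent cone. -/
def normalCone {d : ℕ} (A : Set (EuclideanSpace ℝ (Fin d))) (x : EuclideanSpace ℝ (Fin d)) :
    Set (EuclideanSpace ℝ (Fin d)) :=
  polarCone (contingentCone A x)

/-- The polar cone `K* = {y* | ⟨y*, y⟩ ≤ 0 ∀ y ∈ K}` of `K ⊆ Y` in the dual space. -/
def dualPolar (K : Set Y) : Set (Y →L[ℝ] ℝ) :=
  {l | ∀ y ∈ K, l y ≤ 0}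

/-- The cone `𝒩(x) = [DG(x)]*(K* ∩ lin(G(x))^⊥)`. -/
def calN (G : EuclideanSpace ℝ (Fin d) → Y) (K : Set Y) (x : EuclideanSpace ℝ (Fin d)) :
    Set (EuclideanSpace ℝ (Fin d)) :=
  {v | ∃ l : Y →L[ℝ] ℝ, l ∈ dualPolar K ∧ l (G x) = 0 ∧
    ∀ u : EuclideanSpace ℝ (Fin d), ⟪v, u⟫ = l (fderiv ℝ G x u)}

/-- `λ` is a Lagrange multiplier of problem (P) at a feasible point `x`:
`λ ∈ K*`, `⟨λ, G(x)⟩ = 0` and `[L(·,λ)]'(x, h) ≥ 0` for all `h ∈ T_A(x)`, where the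
directional derivative of the Lagrangian equals `F'(x,h) + ⟨λ, DG(x) h⟩`. -/
def IsLagrangeMult (f : EuclideanSpace ℝ (Fin d) → W → ℝ) (G : EuclideanSpace ℝ (Fin d) → Y)
    (K : Set Y) (A : Set (EuclideanSpace ℝ (Fin d))) (x : EuclideanSpace ℝ (Fin d))
    (l : Y →L[ℝ] ℝ) : Prop :=
  l ∈ dualPolar K ∧ l (G x) = 0 ∧
    ∀ h ∈ contingentCone A x, 0 ≤ Fdir f x h + l (fderiv ℝ G x h)

/-!
Statement 6: for x with G(x) ∈ K one always has 𝒩(x) ⊆ ({h | DG(x)h ∈ T_K(G(x))})*; if in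
addition the weakened Robinson constraint qualification 0 ∈ int{G(x) + DG(x)(ℝ^d) − K} holds,
then the opposite inclusion holds and 𝒩(x) = (T_Ξ(x))* = N_Ξ(x) for Ξ = {z | G(z) ∈ K}.
-/
section AuxLemmas

/-- The contingent cone is always a closed set. -/
lemma contingentCone_isClosed {X : Type*} [NormedAddCommGroup X] [NormedSpace ℝ X]
    (C : Set X) (x : X) : IsClosed (contingentCone C x) := by
  refine IsSeqClosed.isClosed (fun f p hf hfp => ?_)
  -- for each m, pick a good index
  have key : ∀ m : ℕ, ∃ (a : ℝ) (v : X), 0 < a ∧ a ≤ 1/(m+1) ∧ ‖v - f m‖ ≤ 1/(m+1) ∧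
      x + a • v ∈ C := by
    intro m
    obtain ⟨a, v, hapos, ha0, hvf, hmem⟩ := hf m
    have h1 : ∀ᶠ n in atTop, a n < 1/(m+1) :=
      (ha0.eventually (eventually_lt_nhds (by positivity : (0:ℝ) < 1/(m+1))))
    have h2 : ∀ᶠ n in atTop, ‖v n - f m‖ < 1/(m+1) := by
      have := hvf.eventually (Metric.ball_mem_nhds (f m) (by positivity : (0:ℝ) < 1/(m+1)))
      filter_upwards [this] with n hn
      simpa [dist_eq_norm] using hn
    obtain ⟨n, hn1, hn2⟩ := (h1.and h2).exists
    exact ⟨a n, v n, hapos n, hn1.le, hn2.le, hmem n⟩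
  choose a v hapos halt hvclose hmem using key
  refine ⟨a, v, hapos, ?_, ?_, hmem⟩
  · refine squeeze_zero (fun n => (hapos n).le) halt tendsto_one_div_add_atTop_nhds_zero_nat
  · rw [tendsto_iff_norm_sub_tendsto_zero]
    refine squeeze_zero (fun n => norm_nonneg _) (g := fun n => 1/(n+1) + ‖f n - p‖) ?_ ?_
    · intro n
      calc ‖v n - p‖ ≤ ‖v n - f n‖ + ‖f n - p‖ := by
            simpa using norm_add_le (v n - f n) (f n - p)
        _ ≤ 1/(n+1) + ‖f n - p‖ := by gcongr; exact hvclose n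
    · have h2 : Tendsto (fun n => ‖f n - p‖) atTop (𝓝 0) :=
        tendsto_iff_norm_sub_tendsto_zero.1 hfp
      simpa using tendsto_one_div_add_atTop_nhds_zero_nat.add h2

end AuxLemmas

section ConeLemmas

variable {Y : Type*} [NormedAddCommGroup Y] [NormedSpace ℝ Y]

lemma cone_add_mem {K : Set Y} (hKconv : Convex ℝ K)
    (hKcone : ∀ (c : ℝ), 0 ≤ c → ∀ y ∈ K, c • y ∈ K)
    {k₁ k₂ : Y} (h1 : k₁ ∈ K) (h2 : k₂ ∈ K) : k₁ + k₂ ∈ K := by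
  have := hKconv h1 h2 (by norm_num : (0:ℝ) ≤ 1/2) (by norm_num : (0:ℝ) ≤ 1/2) (by norm_num)
  have := hKcone 2 (by norm_num) _ this
  convert this using 1
  module

/-- Elements of the form `σ • (k - b)` belong to the contingent cone of a convex cone `K`
at `b ∈ K`. -/
lemma smul_sub_mem_contingentCone {K : Set Y} (hKconv : Convex ℝ K)
    {b : Y} (hb : b ∈ K) {σ : ℝ} (hσ : 0 ≤ σ) {k : Y} (hk : k ∈ K) :
    σ • (k - b) ∈ contingentCone K b := by
  refine ⟨fun n => 1/((n+1)*(σ+1)), fun _ => σ • (k - b), fun n => by positivity, ?_, tendsto_const_nhds, ?_⟩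
  · have : Tendsto (fun n : ℕ => (1/(σ+1)) * (1/(n+1))) atTop (𝓝 ((1/(σ+1)) * 0)) :=
      tendsto_one_div_add_atTop_nhds_zero_nat.const_mul _
    convert this using 2 with n
    · field_simp
    · ring
  · intro n
    set t : ℝ := (1/((n+1:ℝ)*(σ+1))) * σ with ht
    have ht0 : 0 ≤ t := by positivity
    have ht1 : t ≤ 1 := by
      rw [ht]
      rw [div_mul_eq_mul_div, one_mul, div_le_one (by positivity)]
      nlinarith [hσ, (by positivity : (0:ℝ) < (n:ℝ)+1)]
    have hmem := hKconv hb hk (by linarith : (0:ℝ) ≤ 1 - t) ht0 (by ring)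
    convert hmem using 1
    rw [ht]
    module

lemma subset_contingentCone {K : Set Y} (hKconv : Convex ℝ K)
    (hKcone : ∀ (c : ℝ), 0 ≤ c → ∀ y ∈ K, c • y ∈ K)
    {b : Y} (hb : b ∈ K) {k : Y} (hk : k ∈ K) {s : ℝ} :
    k + s • b ∈ contingentCone K b := by
  rcases le_or_gt 0 s with hs | hs
  · have hk' : k + (s+1) • b ∈ K :=
      cone_add_mem hKconv hKcone hk (hKcone _ (by linarith) _ hb)
    have h1 := smul_sub_mem_contingentCone hKconv hb (zero_le_one (α := ℝ)) hk'
    convert h1 using 1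
    module
  · have hk' : (-s)⁻¹ • k ∈ K := hKcone _ (by rw [inv_nonneg]; linarith) _ hk
    have h1 := smul_sub_mem_contingentCone hKconv hb (by linarith : (0:ℝ) ≤ -s) hk'
    convert h1 using 1
    have hs0 : (-s) ≠ 0 := by linarith
    rw [smul_sub, smul_inv_smul₀ hs0]
    module

end ConeLemmas

section Openness

variable {d : ℕ} {Y : Type*} [NormedAddCommGroup Y] [NormedSpace ℝ Y]

/-- Robinson–Ursescu style openness: under the (weakened) Robinson constraint
qualification, a ball around the origin is covered with bounded pieces. -/
lemma openness_of_CQ [CompleteSpace Y]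
    (K : Set Y) (hKcl : IsClosed K) (hKconv : Convex ℝ K) (hK0 : (0:Y) ∈ K)
    (A : EuclideanSpace ℝ (Fin d) →L[ℝ] Y) (b : Y)
    (hCQ : (0:Y) ∈ interior {y | ∃ h : EuclideanSpace ℝ (Fin d), ∃ k ∈ K, y = b + A h - k}) :
    ∃ ρ > 0, ∃ M > 0, ∀ w : Y, ‖w‖ < ρ →
      ∃ g k, ‖g‖ ≤ M ∧ k ∈ K ∧ ‖k‖ ≤ M ∧ w = A g - k + b := by
  set D : Set Y := {y | ∃ h : EuclideanSpace ℝ (Fin d), ∃ k ∈ K, y = b + A h - k} with hD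
  obtain ⟨ε, hεpos, hball⟩ := Metric.mem_nhds_iff.1 (mem_interior_iff_mem_nhds.1 hCQ)
  -- the bounded pieces
  set P : ℕ → Set Y := fun n =>
    {y | ∃ g k, ‖g‖ ≤ (n:ℝ) ∧ k ∈ K ∧ ‖k‖ ≤ (n:ℝ) ∧ y = A g - k + b} with hP
  have hPclosed : ∀ n, IsClosed (P n) := by
    intro n
    have h1 : IsCompact ((fun g : EuclideanSpace ℝ (Fin d) => A g + b) '' Metric.closedBall 0 n) :=
      (isCompact_closedBall 0 n).image (by continuity)
    have h2 : IsClosed ((fun k : Y => -k) '' (K ∩ Metric.closedBall 0 n)) := by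
      have : IsClosed (K ∩ Metric.closedBall 0 n) := hKcl.inter Metric.isClosed_closedBall
      simpa [Set.image_neg_eq_neg] using this.neg
    have := IsClosed.add_left_of_isCompact h2 h1
    convert this using 1
    ext y
    constructor
    · rintro ⟨g, k, hg, hk, hkn, rfl⟩
      have heq : A g - k + b = (A g + b) + -k := by abel
      rw [heq]
      exact Set.add_mem_add ⟨g, by simpa [Metric.mem_closedBall, dist_eq_norm] using hg, rfl⟩
        ⟨k, ⟨hk, by simpa [Metric.mem_closedBall, dist_eq_norm] using hkn⟩, rfl⟩
    · rintro ⟨u, ⟨g, hg, rfl⟩, w, ⟨k, ⟨hkK, hkn⟩, rfl⟩, rfl⟩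
      refine ⟨g, k, ?_, hkK, ?_, by simp only [sub_eq_add_neg, add_assoc, add_comm b]⟩
      · simpa [Metric.mem_closedBall, dist_eq_norm] using hg
      · simpa [Metric.mem_closedBall, dist_eq_norm] using hkn
  have hDP : ∀ y ∈ D, ∃ n, y ∈ P n := by
    rintro y ⟨h, k, hkK, rfl⟩
    obtain ⟨n, hn⟩ := exists_nat_ge (max ‖h‖ ‖k‖)
    exact ⟨n, h, k, (le_max_left _ _).trans hn, hkK, (le_max_right _ _).trans hn, by abel⟩
  -- Baire category
  set F : ℕ → Set Y := fun n => P n ∪ (Metric.ball (0:Y) ε)ᶜ with hF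
  have hFclosed : ∀ n, IsClosed (F n) := fun n => (hPclosed n).union Metric.isOpen_ball.isClosed_compl
  have hFcover : ⋃ n, F n = Set.univ := by
    ext y; simp only [Set.mem_iUnion, Set.mem_univ, iff_true]
    by_cases hy : y ∈ Metric.ball (0:Y) ε
    · obtain ⟨n, hn⟩ := hDP y (hball hy)
      exact ⟨n, Or.inl hn⟩
    · exact ⟨0, Or.inr hy⟩
  have hdense := dense_iUnion_interior_of_closed hFclosed hFcover
  obtain ⟨y₀, hy₀mem, hy₀ball⟩ := hdense.exists_mem_open Metric.isOpen_ball
    ⟨0, Metric.mem_ball_self hεpos⟩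
  simp only [Set.mem_iUnion] at hy₀mem
  obtain ⟨N, hy₀N⟩ := hy₀mem
  -- a small ball inside P N
  have hopen : IsOpen (interior (F N) ∩ Metric.ball (0:Y) ε) := isOpen_interior.inter Metric.isOpen_ball
  obtain ⟨r, hrpos, hrball⟩ := Metric.isOpen_iff.1 hopen y₀ ⟨hy₀N, hy₀ball⟩
  have hrP : Metric.ball y₀ r ⊆ P N := by
    intro y hy
    have := hrball hy
    rcases interior_subset this.1 with h | h
    · exact h
    · exact absurd this.2 h
  -- a representation of -y₀
  have hy₀' : -y₀ ∈ D := hball (by simpa using hy₀ball)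
  obtain ⟨h₂, k₂, hk₂K, hk₂⟩ := hy₀'
  refine ⟨r/2, by positivity, (N:ℝ) + ‖h₂‖ + ‖k₂‖ + 1, by positivity, ?_⟩
  intro w hw
  have hmem : y₀ + (2:ℝ) • w ∈ Metric.ball y₀ r := by
    simp only [Metric.mem_ball, dist_eq_norm]
    rw [show y₀ + (2:ℝ) • w - y₀ = (2:ℝ) • w by abel]
    rw [norm_smul]
    simp only [Real.norm_ofNat]
    linarith
  obtain ⟨g₁, k₁, hg₁, hk₁K, hk₁n, heq₁⟩ := hrP hmem
  refine ⟨(1/2:ℝ) • (g₁ + h₂), (1/2:ℝ) • (k₁ + k₂), ?_, ?_, ?_, ?_⟩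
  · rw [norm_smul, Real.norm_eq_abs, abs_of_pos (by norm_num : (0:ℝ) < 1/2)]
    have h1 := norm_add_le g₁ h₂
    have h2 : (0:ℝ) ≤ (N:ℝ) := Nat.cast_nonneg N
    have h3 := norm_nonneg h₂
    have h4 := norm_nonneg k₂
    linarith
  · have hmemK := hKconv hk₁K hk₂K (by norm_num : (0:ℝ) ≤ 1/2) (by norm_num : (0:ℝ) ≤ 1/2)
      (by norm_num)
    rw [smul_add]
    exact hmemK
  · rw [norm_smul, Real.norm_eq_abs, abs_of_pos (by norm_num : (0:ℝ) < 1/2)]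
    have h1 := norm_add_le k₁ k₂
    have h2 : (0:ℝ) ≤ (N:ℝ) := Nat.cast_nonneg N
    have h3 := norm_nonneg h₂
    have h4 := norm_nonneg k₂
    linarith
  · have h2w : (2:ℝ) • w = (A g₁ - k₁ + b) + (b + A h₂ - k₂) := by
      rw [← heq₁, ← hk₂]; abel
    have hw2 : w = (1/2:ℝ) • ((A g₁ - k₁ + b) + (b + A h₂ - k₂)) := by
      rw [← h2w]; module
    rw [hw2, map_smul, map_add]
    module

end Openness

section KeyBound

variable {d : ℕ} {Y : Type*} [NormedAddCommGroup Y] [NormedSpace ℝ Y]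

lemma keybound (K : Set Y) (hKconv : Convex ℝ K)
    (hKcone : ∀ (c : ℝ), 0 ≤ c → ∀ y ∈ K, c • y ∈ K)
    (A : EuclideanSpace ℝ (Fin d) →L[ℝ] Y) {b : Y} (hb : b ∈ K)
    {ρ M : ℝ} (hρ : 0 < ρ) (hM : 0 < M)
    (hE : ∀ w : Y, ‖w‖ < ρ → ∃ g k, ‖g‖ ≤ M ∧ k ∈ K ∧ ‖k‖ ≤ M ∧ w = A g - k + b)
    {v : EuclideanSpace ℝ (Fin d)}
    (hv : v ∈ polarCone {h | A h ∈ contingentCone K b}) :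
    ∀ (h₀ : EuclideanSpace ℝ (Fin d)) (z k : Y) (s : ℝ), k ∈ K →
      A h₀ = z + k + s • b → ⟪v, h₀⟫ ≤ (2*M*‖v‖/ρ) * ‖z‖ := by
  have sub : ∀ (h' : EuclideanSpace ℝ (Fin d)) (k' : Y) (s' : ℝ), k' ∈ K →
      A h' = k' + s' • b → ⟪v, h'⟫ ≤ 0 := by
    intro h' k' s' hk' heq
    refine hv h' ?_
    show A h' ∈ contingentCone K b
    rw [heq]
    exact subset_contingentCone hKconv hKcone hb hk'
  intro h₀ z k s hk heq
  rcases eq_or_ne z 0 with rfl | hz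
  · rw [norm_zero, mul_zero]
    exact sub h₀ k s hk (by rw [heq]; abel)
  · have hz' : 0 < ‖z‖ := norm_pos_iff.2 hz
    set w : Y := (-(ρ/(2*‖z‖))) • z with hw
    have hwnorm : ‖w‖ < ρ := by
      rw [hw, norm_smul, Real.norm_eq_abs, abs_neg, abs_of_pos (by positivity)]
      have : ρ/(2*‖z‖) * ‖z‖ = ρ/2 := by field_simp
      rw [this]; linarith
    obtain ⟨g, k', hg, hk', hk'n, hweq⟩ := hE w hwnorm
    set t : ℝ := 2*‖z‖/ρ with htdef
    have ht : 0 < t := by positivity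
    have htw : t • w = -z := by
      rw [hw, smul_smul]
      have hc : t * (-(ρ/(2*‖z‖))) = -1 := by
        rw [htdef]; field_simp
      rw [hc, neg_one_smul]
    have hAg : A g = w + k' - b := by rw [hweq]; abel
    have hA : A (h₀ + t • g) = (k + t • k') + (s - t) • b := by
      rw [map_add, map_smul, heq, hAg]
      have expand : z + k + s•b + t•(w + k' - b) = (z + t•w) + (k + t•k') + (s - t)•b := by
        module
      rw [expand, htw]
      module
    have hkk : k + t • k' ∈ K := cone_add_mem hKconv hKcone hk (hKcone t ht.le _ hk')
    have h0 := sub _ _ _ hkk hA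
    rw [inner_add_right, real_inner_smul_right] at h0
    have hvg : |⟪v, g⟫| ≤ ‖v‖ * M :=
      (abs_real_inner_le_norm v g).trans (mul_le_mul_of_nonneg_left hg (norm_nonneg v))
    have h2 : -(t * ⟪v,g⟫) ≤ t * (‖v‖*M) := by nlinarith [abs_le.1 hvg, ht.le]
    have hfin : t * (‖v‖*M) = (2*M*‖v‖/ρ) * ‖z‖ := by rw [htdef]; field_simp
    linarith
end KeyBound

section HB

variable {d : ℕ} {Y : Type*} [NormedAddCommGroup Y] [NormedSpace ℝ Y]

lemma polar_subset_rep (K : Set Y) (hKconv : Convex ℝ K)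
    (hKcone : ∀ (c : ℝ), 0 ≤ c → ∀ y ∈ K, c • y ∈ K) (hK0 : (0:Y) ∈ K)
    (A : EuclideanSpace ℝ (Fin d) →L[ℝ] Y) {b : Y} (hb : b ∈ K)
    {ρ M : ℝ} (hρ : 0 < ρ) (hM : 0 < M)
    (hE : ∀ w : Y, ‖w‖ < ρ → ∃ g k, ‖g‖ ≤ M ∧ k ∈ K ∧ ‖k‖ ≤ M ∧ w = A g - k + b)
    {v : EuclideanSpace ℝ (Fin d)}
    (hv : v ∈ polarCone {h | A h ∈ contingentCone K b}) :
    ∃ l : Y →L[ℝ] ℝ, (∀ y ∈ K, l y ≤ 0) ∧ l b = 0 ∧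
      ∀ u : EuclideanSpace ℝ (Fin d), ⟪v, u⟫ = l (A u) := by
  set C : ℝ := 2*M*‖v‖/ρ with hC
  have hC0 : 0 ≤ C := by positivity
  have kb := keybound K hKconv hKcone A hb hρ hM hE hv
  set Dec : Y → Set ℝ := fun y =>
    {r | ∃ (z : Y) (h : EuclideanSpace ℝ (Fin d)) (k : Y) (s : ℝ), k ∈ K ∧ y = z + A h + k + s • b ∧ r = C*‖z‖ + ⟪v, h⟫} with hDec
  have hne : ∀ y, (C*‖y‖ + ⟪v, (0:EuclideanSpace ℝ (Fin d))⟫) ∈ Dec y :=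
    fun y => ⟨y, 0, 0, 0, hK0, by simp, rfl⟩
  have hlb : ∀ y r, r ∈ Dec y → -(C*‖y‖) ≤ r := by
    rintro y r ⟨z, h, k, s, hkK, hyeq, rfl⟩
    have heq : A (-h) = (z - y) + k + s • b := by
      rw [map_neg, hyeq]; abel
    have h1 := kb (-h) (z-y) k s hkK heq
    rw [inner_neg_right] at h1
    have hn : ‖z - y‖ ≤ ‖z‖ + ‖y‖ := norm_sub_le _ _
    nlinarith
  have hbdd : ∀ y, BddBelow (Dec y) := fun y => ⟨-(C*‖y‖), fun r hr => hlb y r hr⟩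
  set p : Y → ℝ := fun y => sInf (Dec y) with hp
  have hple : ∀ y r, r ∈ Dec y → p y ≤ r := fun y r hr => csInf_le (hbdd y) hr
  have hpub : ∀ y, p y ≤ C*‖y‖ := fun y => by simpa using hple y _ (hne y)
  have hplb : ∀ y, -(C*‖y‖) ≤ p y := fun y => le_csInf ⟨_, hne y⟩ (hlb y)
  have hadd : ∀ y₁ y₂, p (y₁+y₂) ≤ p y₁ + p y₂ := by
    intro y₁ y₂
    have key : ∀ r₁ ∈ Dec y₁, ∀ r₂ ∈ Dec y₂, p (y₁+y₂) ≤ r₁ + r₂ := by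
      rintro r₁ ⟨z₁,h₁,k₁,s₁,hk₁,he₁,rfl⟩ r₂ ⟨z₂,h₂,k₂,s₂,hk₂,he₂,rfl⟩
      have hmem : C*‖z₁+z₂‖ + ⟪v, h₁+h₂⟫ ∈ Dec (y₁+y₂) :=
        ⟨z₁+z₂, h₁+h₂, k₁+k₂, s₁+s₂, cone_add_mem hKconv hKcone hk₁ hk₂,
          by rw [he₁, he₂, map_add]; module, rfl⟩
      refine (hple _ _ hmem).trans ?_
      have hn := norm_add_le z₁ z₂
      rw [inner_add_right]
      nlinarith
    have h1 : ∀ r₁ ∈ Dec y₁, p (y₁+y₂) - r₁ ≤ p y₂ := fun r₁ hr₁ =>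
      le_csInf ⟨_, hne y₂⟩ (fun r₂ hr₂ => by linarith [key r₁ hr₁ r₂ hr₂])
    have h2 : p (y₁+y₂) - p y₂ ≤ p y₁ :=
      le_csInf ⟨_, hne y₁⟩ (fun r₁ hr₁ => by linarith [h1 r₁ hr₁])
    linarith
  have hscale : ∀ c : ℝ, 0 < c → ∀ y, p (c • y) ≤ c * p y := by
    intro c hc y
    have hdiv : p (c•y) / c ≤ p y := by
      refine le_csInf ⟨_, hne y⟩ ?_
      rintro r ⟨z,h,k,s,hk,he,rfl⟩
      have hmem : C*‖c•z‖ + ⟪v, c•h⟫ ∈ Dec (c•y) :=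
        ⟨c•z, c•h, c•k, c*s, hKcone c hc.le _ hk,
          by rw [he, map_smul]; module, rfl⟩
      have h1 := hple _ _ hmem
      have hnorm : ‖c•z‖ = c*‖z‖ := by rw [norm_smul, Real.norm_eq_abs, abs_of_pos hc]
      rw [hnorm, real_inner_smul_right] at h1
      rw [div_le_iff₀ hc]
      calc p (c•y) ≤ C*(c*‖z‖) + c*⟪v,h⟫ := h1
        _ = (C*‖z‖ + ⟪v,h⟫) * c := by ring
    calc p (c•y) = (p (c•y) / c) * c := by field_simp
      _ ≤ p y * c := mul_le_mul_of_nonneg_right hdiv hc.le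
      _ = c * p y := mul_comm _ _
  have hhom : ∀ c : ℝ, 0 < c → ∀ y, p (c • y) = c * p y := by
    intro c hc y
    refine le_antisymm (hscale c hc y) ?_
    have h1 := hscale c⁻¹ (inv_pos.2 hc) (c • y)
    rw [inv_smul_smul₀ hc.ne'] at h1
    calc c * p y ≤ c * (c⁻¹ * p (c•y)) := mul_le_mul_of_nonneg_left h1 hc.le
      _ = p (c•y) := by field_simp
  have hf0 : ∀ x : ((⊥ : Submodule ℝ Y) : Submodule ℝ Y),
      ((⟨⊥, 0⟩ : Y →ₗ.[ℝ] ℝ) : Y →ₗ.[ℝ] ℝ) x ≤ p x := by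
    intro x
    have hx0 : (x : Y) = 0 := (Submodule.mem_bot ℝ).1 x.2
    have h1 := hplb (x : Y)
    rw [hx0] at h1 ⊢
    simpa using h1
  obtain ⟨l₀, -, hl₀⟩ := exists_extension_of_le_sublinear ⟨⊥, 0⟩ p hhom hadd hf0
  have habs : ∀ y, |l₀ y| ≤ C*‖y‖ := by
    intro y
    refine abs_le.2 ⟨?_, (hl₀ y).trans (hpub y)⟩
    have h1 := (hl₀ (-y)).trans (hpub (-y))
    rw [map_neg, norm_neg] at h1
    linarith
  set l : Y →L[ℝ] ℝ := l₀.mkContinuous C (fun y => by simpa [Real.norm_eq_abs] using habs y)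
    with hl
  have hlapp : ∀ y, l y = l₀ y := fun y => rfl
  refine ⟨l, ?_, ?_, ?_⟩
  · intro y hy
    have := (hl₀ y).trans (hple y _ ⟨0, 0, y, 0, hy, by simp, rfl⟩)
    rw [hlapp]
    simpa using this
  · have h1 := (hl₀ b).trans (hple b _ ⟨0, 0, 0, 1, hK0, by simp, rfl⟩)
    have h2 := (hl₀ (-b)).trans (hple (-b) _ ⟨0, 0, 0, -1, hK0, by simp, rfl⟩)
    rw [map_neg] at h2
    simp only [norm_zero, mul_zero, inner_zero_right, zero_add, add_zero] at h1 h2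
    rw [hlapp]
    linarith
  · intro u
    have h1 := (hl₀ (A u)).trans (hple (A u) _ ⟨0, u, 0, 0, hK0, by simp, rfl⟩)
    have h2 := (hl₀ (A (-u))).trans (hple (A (-u)) _ ⟨0, -u, 0, 0, hK0, by simp, rfl⟩)
    rw [map_neg, map_neg] at h2
    rw [inner_neg_right] at h2
    simp only [norm_zero, mul_zero, zero_add] at h1 h2
    rw [hlapp]
    linarith

end HB

section Iteration

variable {d : ℕ} {Y : Type*} [NormedAddCommGroup Y] [NormedSpace ℝ Y]

set_option maxHeartbeats 1000000 in
lemma mem_contingent_of_S [CompleteSpace Y]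
    (K : Set Y) (hKcl : IsClosed K) (hKconv : Convex ℝ K)
    (hKcone : ∀ (c : ℝ), 0 ≤ c → ∀ y ∈ K, c • y ∈ K)
    (G : EuclideanSpace ℝ (Fin d) → Y) (hG : ContDiff ℝ 1 G)
    (x : EuclideanSpace ℝ (Fin d)) (hxK : G x ∈ K)
    {ρ M : ℝ} (hρ : 0 < ρ) (hM : 0 < M)
    (hE : ∀ w : Y, ‖w‖ < ρ → ∃ g k, ‖g‖ ≤ M ∧ k ∈ K ∧ ‖k‖ ≤ M ∧
      w = fderiv ℝ G x g - k + G x)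
    (h : EuclideanSpace ℝ (Fin d)) {σ : ℝ} (hσ : 0 ≤ σ) {kst : Y} (hkst : kst ∈ K)
    (hAh : fderiv ℝ G x h = σ • (kst - G x)) :
    h ∈ contingentCone {z | G z ∈ K} x := by
  classical
  set A : EuclideanSpace ℝ (Fin d) →L[ℝ] Y := fderiv ℝ G x with hA
  have hdiff : Differentiable ℝ G := hG.differentiable one_ne_zero
  have hcont : Continuous (fun z => fderiv ℝ G z) := hG.continuous_fderiv one_ne_zero
  have hquarter : 0 < ρ/(4*M) := by positivity
  obtain ⟨δ, hδpos, hδ⟩ : ∃ δ > 0, ∀ z ∈ Metric.closedBall x δ,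
      ‖fderiv ℝ G z - A‖ ≤ ρ/(4*M) := by
    obtain ⟨δ', hδ'pos, hδ'⟩ := Metric.continuousAt_iff.1 hcont.continuousAt (ρ/(4*M)) hquarter
    refine ⟨δ'/2, by positivity, fun z hz => ?_⟩
    have h1 : dist z x < δ' := lt_of_le_of_lt (Metric.mem_closedBall.1 hz) (by linarith)
    have h2 := hδ' h1
    rw [dist_eq_norm] at h2
    exact h2.le
  -- mean value inequality on the ball
  have hmv : ∀ z ∈ Metric.closedBall x δ, ∀ w ∈ Metric.closedBall x δ,
      ‖G w - G z - A (w - z)‖ ≤ (ρ/(4*M)) * ‖w - z‖ := by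
    intro z hz w hw
    have key := Convex.norm_image_sub_le_of_norm_fderiv_le
      (f := fun y => G y - A y) (C := ρ/(4*M)) (s := Metric.closedBall x δ)
      (fun y _ => (hdiff y).sub A.differentiableAt)
      (fun y hy => by
        rw [fderiv_fun_sub (hdiff y) A.differentiableAt, A.fderiv]
        exact hδ y hy)
      (convex_closedBall x δ) hz hw
    have hre : G w - A w - (G z - A z) = G w - G z - A (w - z) := by
      rw [map_sub]; abel
    rwa [hre] at key
  -- the iteration claim for a fixed small a
  have claim : ∀ a ε₀ : ℝ, 0 < a → 0 < ε₀ →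
      ‖G (x + a • h) - G x - a • (A h)‖ ≤ a * ε₀ →
      a * (σ + 4*ε₀/ρ) ≤ 1 →
      a * (‖h‖ + 4*M*ε₀/ρ) ≤ δ →
      ∃ u, ‖u - h‖ ≤ 4*M*ε₀/ρ ∧ G (x + a • u) ∈ K := by
    intro a ε₀ ha hε₀ hinit hsmall1 hsmall2
    set Inv : ℕ → (EuclideanSpace ℝ (Fin d)) × Y × ℝ → Prop := fun n s =>
      s.2.1 ∈ K ∧ 0 ≤ s.2.2 ∧ s.2.2 ≤ a*σ + (4*a*ε₀/ρ)*(1 - (1/2:ℝ)^n) ∧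
      ‖s.1 - h‖ ≤ (4*M*ε₀/ρ)*(1 - (1/2:ℝ)^n) ∧
      ‖G (x + a • s.1) - ((1 - s.2.2) • G x + s.2.2 • s.2.1)‖ ≤ a*ε₀*(1/2:ℝ)^n
      with hInv
    have base : Inv 0 (h, kst, a*σ) := by
      simp only [hInv, pow_zero]
      refine ⟨hkst, by positivity, by norm_num, by norm_num, ?_⟩
      have e1 : G (x+a•h) - ((1-a*σ)•G x + (a*σ)•kst) = G (x+a•h) - G x - a • (A h) := by
        rw [hAh]; module
      rw [e1]
      simpa using hinit
    have step : ∀ n (s : (EuclideanSpace ℝ (Fin d)) × Y × ℝ), Inv n s →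
        ∃ s', Inv (n+1) s' ∧ ‖s'.1 - s.1‖ ≤ (2*M*ε₀/ρ)*(1/2:ℝ)^n := by
      rintro n ⟨u, c, β⟩ hs
      simp only [hInv] at hs
      obtain ⟨hcK, hβ0, hβub, huh, herr⟩ := hs
      set εn : ℝ := ε₀ * (1/2:ℝ)^n with hεn
      have hεnpos : 0 < εn := by positivity
      have henorm : ‖G (x + a • u) - ((1 - β) • G x + β • c)‖ ≤ a * εn := by
        rw [hεn, ← mul_assoc]; exact herr
      set e : Y := G (x + a•u) - ((1-β)•G x + β•c) with he
      set t : ℝ := 2*εn/ρ with ht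
      have htpos : 0 < t := by positivity
      have hatpos : 0 < a*t := by positivity
      set w : Y := (-(1/(a*t))) • e with hw
      have hwnorm : ‖w‖ < ρ := by
        rw [hw, norm_smul, Real.norm_eq_abs, abs_neg, abs_of_pos (by positivity)]
        have h1 : (1/(a*t)) * ‖e‖ ≤ (1/(a*t)) * (a*εn) :=
          mul_le_mul_of_nonneg_left henorm (by positivity)
        have h2 : (1/(a*t)) * (a*εn) = ρ/2 := by rw [ht]; field_simp
        linarith
      obtain ⟨g, k, hg, hkK, hkn, hweq⟩ := hE w hwnorm
      have hβ'pos : 0 < β + a*t := by linarith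
      refine ⟨(u + t•g, (β/(β+a*t))•c + ((a*t)/(β+a*t))•k, β + a*t), ?_, ?_⟩
      · simp only [hInv]
        have hat2 : a*t = (4*a*ε₀/ρ)*((1/2:ℝ)^n/2) := by rw [ht, hεn]; field_simp; ring
        have htM : t*M = (4*M*ε₀/ρ)*((1/2:ℝ)^n/2) := by rw [ht, hεn]; field_simp; ring
        have hpow : ((1/2:ℝ))^(n+1) = ((1/2:ℝ))^n * (1/2) := pow_succ _ _
        refine ⟨?_, by positivity, ?_, ?_, ?_⟩
        · -- c' ∈ K
          refine hKconv hcK hkK (by positivity) (by positivity) ?_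
          field_simp
        · -- β bound
          have expand : (4*a*ε₀/ρ)*(1-(1/2:ℝ)^n*(1/2)) =
              (4*a*ε₀/ρ)*(1-(1/2:ℝ)^n) + (4*a*ε₀/ρ)*((1/2:ℝ)^n/2) := by ring
          rw [hpow, expand]
          linarith [hat2]
        · -- displacement bound
          have h1 : ‖u + t•g - h‖ ≤ ‖u - h‖ + t*‖g‖ := by
            calc ‖u + t•g - h‖ = ‖(u - h) + t•g‖ := by
                  rw [show u + t•g - h = (u - h) + t•g from by abel]
              _ ≤ ‖u - h‖ + ‖t•g‖ := norm_add_le _ _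
              _ = ‖u - h‖ + t*‖g‖ := by
                  rw [norm_smul, Real.norm_eq_abs, abs_of_pos htpos]
          have h2 : t*‖g‖ ≤ t*M := mul_le_mul_of_nonneg_left hg htpos.le
          have expand : (4*M*ε₀/ρ)*(1-(1/2:ℝ)^n*(1/2)) =
              (4*M*ε₀/ρ)*(1-(1/2:ℝ)^n) + (4*M*ε₀/ρ)*((1/2:ℝ)^n/2) := by ring
          rw [hpow, expand]
          linarith [htM]
        · -- error bound
          have hP0 : (0:ℝ) ≤ (1/2:ℝ)^n := by positivity
          have hP1 : ((1/2:ℝ))^n ≤ 1 := pow_le_one₀ (by norm_num) (by norm_num)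
          have hq0 : (0:ℝ) ≤ 4*M*ε₀/ρ := by positivity
          have hqP : (0:ℝ) ≤ (4*M*ε₀/ρ) * ((1/2:ℝ)^n) := mul_nonneg hq0 hP0
          -- ball memberships
          have hexpQ : (4*M*ε₀/ρ)*(1-(1/2:ℝ)^n) =
              4*M*ε₀/ρ - (4*M*ε₀/ρ)*((1/2:ℝ)^n) := by ring
          have hubd : ‖u‖ ≤ ‖h‖ + 4*M*ε₀/ρ := by
            have h9 := norm_add_le h (u - h)
            simp only [add_sub_cancel] at h9
            linarith [huh, hqP, hexpQ]
          have hu'bd : ‖u + t•g‖ ≤ ‖h‖ + 4*M*ε₀/ρ := by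
            have h3 := norm_add_le h (u + t•g - h)
            simp only [add_sub_cancel] at h3
            have h4 : ‖u + t•g - h‖ ≤ ‖u-h‖ + t*M := by
              calc ‖u + t•g - h‖ = ‖(u - h) + t•g‖ := by
                    rw [show u + t•g - h = (u - h) + t•g from by abel]
                _ ≤ ‖u - h‖ + ‖t•g‖ := norm_add_le _ _
                _ ≤ ‖u-h‖ + t*M := by
                    rw [norm_smul, Real.norm_eq_abs, abs_of_pos htpos]
                    linarith [mul_le_mul_of_nonneg_left hg htpos.le]
            have hexp2 : (4*M*ε₀/ρ)*((1/2:ℝ)^n/2) ≤ (4*M*ε₀/ρ)*((1/2:ℝ)^n) := by nlinarith [hqP]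
            linarith [huh, hqP, hexpQ, htM, hexp2]
          have hball1 : x + a•u ∈ Metric.closedBall x δ := by
            rw [Metric.mem_closedBall, dist_eq_norm]
            have : x + a•u - x = a•u := by abel
            rw [this, norm_smul, Real.norm_eq_abs, abs_of_pos ha]
            calc a * ‖u‖ ≤ a * (‖h‖ + 4*M*ε₀/ρ) := mul_le_mul_of_nonneg_left hubd ha.le
              _ ≤ δ := hsmall2
          have hball2 : x + a•(u + t•g) ∈ Metric.closedBall x δ := by
            rw [Metric.mem_closedBall, dist_eq_norm]
            have : x + a•(u + t•g) - x = a•(u + t•g) := by abel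
            rw [this, norm_smul, Real.norm_eq_abs, abs_of_pos ha]
            calc a * ‖u + t•g‖ ≤ a * (‖h‖ + 4*M*ε₀/ρ) := mul_le_mul_of_nonneg_left hu'bd ha.le
              _ ≤ δ := hsmall2
          -- the mean value correction term
          set r : Y := G (x + a•(u + t•g)) - G (x + a•u) - A ((x + a•(u + t•g)) - (x + a•u))
            with hrdef
          have hrle : ‖r‖ ≤ a*εn/2 := by
            have h5 := hmv _ hball1 _ hball2
            have h6 : (x + a•(u + t•g)) - (x + a•u) = (a*t)•g := by module
            rw [← hrdef] at h5
            rw [h6] at h5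
            have h7 : ‖(a*t)•g‖ = (a*t)*‖g‖ := by
              rw [norm_smul, Real.norm_eq_abs, abs_of_pos hatpos]
            rw [h7] at h5
            have h8 : (ρ/(4*M))*((a*t)*‖g‖) ≤ (ρ/(4*M))*((a*t)*M) := by
              have := mul_le_mul_of_nonneg_left hg hatpos.le
              exact mul_le_mul_of_nonneg_left this (by positivity)
            have h9 : (ρ/(4*M))*((a*t)*M) = a*εn/2 := by rw [ht]; field_simp; ring
            linarith
          -- algebraic identity: the new error equals r
          have hAg : A g = w + k - G x := by rw [hweq]; abel
          have hatw : (a*t)•w = -e := by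
            rw [hw, smul_smul]
            have hcc : (a*t) * (-(1/(a*t))) = -1 := by field_simp
            rw [hcc, neg_one_smul]
          have hGu : G (x+a•u) = (1-β)•G x + β•c + e := by rw [he]; abel
          have hGu' : G (x+a•(u + t•g)) = G (x+a•u) + (a*t)•(A g) + r := by
            rw [hrdef]
            have h6 : (x + a•(u + t•g)) - (x + a•u) = (a*t)•g := by module
            rw [h6, map_smul]
            abel
          have hc'eq : (β+a*t) • ((β/(β+a*t))•c + ((a*t)/(β+a*t))•k) = β•c + (a*t)•k := by
            rw [smul_add, smul_smul, smul_smul]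
            rw [mul_div_cancel₀ _ hβ'pos.ne', mul_div_cancel₀ _ hβ'pos.ne']
          have hkey : G (x + a•(u + t•g)) -
              ((1 - (β+a*t)) • G x + (β+a*t) • ((β/(β+a*t))•c + ((a*t)/(β+a*t))•k)) = r := by
            rw [hc'eq, hGu', hGu, hAg, smul_sub, smul_add, hatw]
            module
          rw [hkey]
          have hfin : a*εn/2 = a*ε₀*(1/2:ℝ)^(n+1) := by
            rw [hεn, pow_succ]; ring
          linarith [hrle]
      · -- increment bound
        have : u + t•g - u = t•g := by abel
        rw [this, norm_smul, Real.norm_eq_abs, abs_of_pos htpos]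
        have h2 : t*‖g‖ ≤ t*M := mul_le_mul_of_nonneg_left hg htpos.le
        have h3 : t*M = (2*M*ε₀/ρ)*(1/2:ℝ)^n := by rw [ht, hεn]; field_simp
        linarith
    -- build the sequence by recursion and choice
    choose f hf1 hf2 using step
    let seq : ∀ n : ℕ, {s : (EuclideanSpace ℝ (Fin d)) × Y × ℝ // Inv n s} := fun n =>
      Nat.rec (motive := fun n => {s : (EuclideanSpace ℝ (Fin d)) × Y × ℝ // Inv n s}) ⟨(h, kst, a*σ), base⟩ (fun n p => ⟨f n p.1 p.2, hf1 n p.1 p.2⟩) n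
    set u : ℕ → EuclideanSpace ℝ (Fin d) := fun n => (seq n).1.1 with hu
    have hddist : ∀ n, dist (u n) (u (n+1)) ≤ (2*M*ε₀/ρ) * (1/2:ℝ)^n := by
      intro n
      rw [dist_eq_norm, norm_sub_rev]
      exact hf2 n (seq n).1 (seq n).2
    have hcauchy : CauchySeq u :=
      cauchySeq_of_le_geometric (1/2) (2*M*ε₀/ρ) (by norm_num) hddist
    obtain ⟨uinf, huinf⟩ := cauchySeq_tendsto_of_complete hcauchy
    have hinv : ∀ n, Inv n (seq n).1 := fun n => (seq n).2
    refine ⟨uinf, ?_, ?_⟩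
    · have hbd : ∀ n, ‖u n - h‖ ≤ 4*M*ε₀/ρ := by
        intro n
        have h1 := (hinv n).2.2.2.1
        have hP0 : (0:ℝ) ≤ (1/2:ℝ)^n := by positivity
        have hq0 : (0:ℝ) ≤ 4*M*ε₀/ρ := by positivity
        nlinarith
      have hlim : Tendsto (fun n => ‖u n - h‖) atTop (𝓝 ‖uinf - h‖) :=
        ((huinf.sub tendsto_const_nhds).norm)
      exact le_of_tendsto hlim (Filter.Eventually.of_forall hbd)
    · have hβmem : ∀ n, (1 - (seq n).1.2.2) • G x + (seq n).1.2.2 • (seq n).1.2.1 ∈ K := by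
        intro n
        obtain ⟨hcK, hβ0, hβub, -, -⟩ := hinv n
        have hP0 : (0:ℝ) ≤ (1/2:ℝ)^n := by positivity
        have hq0 : (0:ℝ) ≤ 4*a*ε₀/ρ := by positivity
        have hqP : (0:ℝ) ≤ (4*a*ε₀/ρ) * ((1/2:ℝ)^n) := mul_nonneg hq0 hP0
        refine hKconv hxK hcK ?_ hβ0 (by ring)
        have hexp : 4*a*ε₀/ρ*(1-(1/2:ℝ)^n) = 4*a*ε₀/ρ - 4*a*ε₀/ρ*(1/2:ℝ)^n := by ring
        have hring : a*(σ+4*ε₀/ρ) = a*σ + 4*a*ε₀/ρ := by ring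
        linarith [hsmall1, hβub, hqP]
      have hGlim : Tendsto (fun n => G (x + a • u n)) atTop (𝓝 (G (x + a•uinf))) :=
        (hG.continuous.tendsto _).comp (tendsto_const_nhds.add (huinf.const_smul a))
      have herrlim : Tendsto (fun n => G (x + a•u n) -
          ((1-(seq n).1.2.2)•G x + (seq n).1.2.2•(seq n).1.2.1)) atTop (𝓝 0) := by
        refine squeeze_zero_norm (fun n => (hinv n).2.2.2.2) ?_
        have := (tendsto_pow_atTop_nhds_zero_of_lt_one (by norm_num : (0:ℝ) ≤ 1/2)
          (by norm_num : (1/2:ℝ) < 1)).const_mul (a*ε₀)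
        simpa [mul_assoc] using this
      have hκ : Tendsto (fun n => (1-(seq n).1.2.2)•G x + (seq n).1.2.2•(seq n).1.2.1)
          atTop (𝓝 (G (x+a•uinf))) := by
        have h2 := hGlim.sub herrlim
        simpa using h2
      exact hKcl.mem_of_tendsto hκ (Filter.Eventually.of_forall hβmem)
  -- smallness of the first-order error along direction h
  have hlittle : ∀ η : ℝ, 0 < η → ∃ a, 0 < a ∧ a ≤ η ∧
      ‖G (x + a • h) - G x - a • (A h)‖ ≤ a * η := by
    intro η hη
    rcases eq_or_ne h 0 with rfl | hh
    · refine ⟨η, hη, le_refl _, ?_⟩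
      simp [map_zero]
      positivity
    · have hhn : 0 < ‖h‖ := norm_pos_iff.2 hh
      have hol := hasFDerivAt_iff_isLittleO_nhds_zero.1 (hdiff x).hasFDerivAt
      have hev := hol.def (show 0 < η/‖h‖ by positivity)
      obtain ⟨δ', hδ'pos, hδ'⟩ := Metric.eventually_nhds_iff.1 hev
      set a : ℝ := min η (δ'/(2*‖h‖)) with hadef
      have hapos : 0 < a := lt_min hη (by positivity)
      refine ⟨a, hapos, min_le_left _ _, ?_⟩
      have hsm : dist (a•h) (0 : EuclideanSpace ℝ (Fin d)) < δ' := by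
        rw [dist_zero_right, norm_smul, Real.norm_eq_abs, abs_of_pos hapos]
        have h1 : a ≤ δ'/(2*‖h‖) := min_le_right _ _
        have h2 : a*‖h‖ ≤ (δ'/(2*‖h‖))*‖h‖ := mul_le_mul_of_nonneg_right h1 hhn.le
        have h3 : (δ'/(2*‖h‖))*‖h‖ = δ'/2 := by field_simp
        linarith
      have h4 := hδ' hsm
      have h5 : ‖G (x + a•h) - G x - A (a•h)‖ ≤ (η/‖h‖) * ‖a•h‖ := h4
      rw [map_smul] at h5
      have h6 : (η/‖h‖) * ‖a•h‖ = a * η := by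
        rw [norm_smul, Real.norm_eq_abs, abs_of_pos hapos]
        field_simp
      rw [h6] at h5
      exact h5
  -- choose the sequence of parameters
  have hchoice : ∀ n : ℕ, ∃ a u, 0 < a ∧ a ≤ 1/((n:ℝ)+1) ∧ ‖u - h‖ ≤ 1/((n:ℝ)+1) ∧
      G (x + a•u) ∈ K := by
    intro n
    have hd1 : (0:ℝ) < σ + 4/ρ := by positivity
    have hd2 : (0:ℝ) < ‖h‖ + 4*M/ρ := by positivity
    obtain ⟨η, hηpos, hη1, hηn, hηM, hησ, hηδ⟩ : ∃ η : ℝ, 0 < η ∧ η ≤ 1 ∧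
        η ≤ 1/((n:ℝ)+1) ∧ η ≤ ρ/(4*M*((n:ℝ)+1)) ∧ η ≤ 1/(σ + 4/ρ) ∧
        η ≤ δ/(‖h‖ + 4*M/ρ) := by
      refine ⟨min (min (1/((n:ℝ)+1)) (ρ/(4*M*((n:ℝ)+1))))
        (min 1 (min (1/(σ + 4/ρ)) (δ/(‖h‖ + 4*M/ρ)))), ?_, ?_, ?_, ?_, ?_, ?_⟩
      · refine lt_min (lt_min (by positivity) (by positivity))
          (lt_min one_pos (lt_min (by positivity) (by positivity)))
      · exact le_trans (min_le_right _ _) (min_le_left _ _)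
      · exact le_trans (min_le_left _ _) (min_le_left _ _)
      · exact le_trans (min_le_left _ _) (min_le_right _ _)
      · exact le_trans (min_le_right _ _) (le_trans (min_le_right _ _) (min_le_left _ _))
      · exact le_trans (min_le_right _ _) (le_trans (min_le_right _ _) (min_le_right _ _))
    obtain ⟨a, hapos, haη, herr⟩ := hlittle η hηpos
    have hsmall1 : a * (σ + 4*η/ρ) ≤ 1 := by
      have hinner : σ + 4*η/ρ ≤ σ + 4/ρ := by
        have h9 : 4*η/ρ ≤ 4/ρ := by
          rw [div_le_div_iff₀ hρ hρ]
          nlinarith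
        linarith
      have hpos2 : (0:ℝ) ≤ σ + 4*η/ρ := by positivity
      have hstep1 : a * (σ + 4*η/ρ) ≤ η * (σ + 4/ρ) :=
        mul_le_mul haη hinner hpos2 hηpos.le
      have hη2 : η*(σ+4/ρ) ≤ 1 := by
        have := (le_div_iff₀ hd1).1 hησ
        linarith
      linarith
    have hsmall2 : a * (‖h‖ + 4*M*η/ρ) ≤ δ := by
      have hinner : ‖h‖ + 4*M*η/ρ ≤ ‖h‖ + 4*M/ρ := by
        have h9 : 4*M*η/ρ ≤ 4*M/ρ := by
          rw [div_le_div_iff₀ hρ hρ]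
          nlinarith [mul_pos hM hρ, hη1]
        linarith
      have hpos2 : (0:ℝ) ≤ ‖h‖ + 4*M*η/ρ := by positivity
      have hstep1 : a * (‖h‖ + 4*M*η/ρ) ≤ η * (‖h‖ + 4*M/ρ) :=
        mul_le_mul haη hinner hpos2 hηpos.le
      have hη2 : η*(‖h‖ + 4*M/ρ) ≤ δ := by
        have := (le_div_iff₀ hd2).1 hηδ
        linarith
      linarith
    obtain ⟨u, huh, huK⟩ := claim a η hapos hηpos herr hsmall1 hsmall2
    have hq : 4*M*η/ρ ≤ 1/((n:ℝ)+1) := by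
      rw [div_le_div_iff₀ hρ (by positivity : (0:ℝ) < (n:ℝ)+1)]
      have h8 := (le_div_iff₀ (by positivity : (0:ℝ) < 4*M*((n:ℝ)+1))).1 hηM
      linarith [h8, (by ring : η*(4*M*((n:ℝ)+1)) = 4*M*η*((n:ℝ)+1))]
    exact ⟨a, u, hapos, haη.trans hηn, huh.trans hq, huK⟩
  choose aseq useq h1 h2 h3 h4 using hchoice
  refine ⟨aseq, useq, h1, ?_, ?_, h4⟩
  · exact squeeze_zero (fun n => (h1 n).le) h2 tendsto_one_div_add_atTop_nhds_zero_nat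
  · rw [tendsto_iff_norm_sub_tendsto_zero]
    exact squeeze_zero (fun n => norm_nonneg _) h3 tendsto_one_div_add_atTop_nhds_zero_nat

end Iteration

section Correction

variable {d : ℕ} {Y : Type*} [NormedAddCommGroup Y] [NormedSpace ℝ Y]

lemma linearized_subset_contingent [CompleteSpace Y]
    (K : Set Y) (hKcl : IsClosed K) (hKconv : Convex ℝ K)
    (hKcone : ∀ (c : ℝ), 0 ≤ c → ∀ y ∈ K, c • y ∈ K)
    (G : EuclideanSpace ℝ (Fin d) → Y) (hG : ContDiff ℝ 1 G)
    (x : EuclideanSpace ℝ (Fin d)) (hxK : G x ∈ K)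
    {ρ M : ℝ} (hρ : 0 < ρ) (hM : 0 < M)
    (hE : ∀ w : Y, ‖w‖ < ρ → ∃ g k, ‖g‖ ≤ M ∧ k ∈ K ∧ ‖k‖ ≤ M ∧
      w = fderiv ℝ G x g - k + G x)
    (h : EuclideanSpace ℝ (Fin d)) (hh : fderiv ℝ G x h ∈ contingentCone K (G x)) :
    h ∈ contingentCone {z | G z ∈ K} x := by
  set A : EuclideanSpace ℝ (Fin d) →L[ℝ] Y := fderiv ℝ G x with hA
  have happrox : ∀ η : ℝ, 0 < η → ∃ (σ : ℝ) (k : Y), 0 ≤ σ ∧ k ∈ K ∧ ‖A h - σ • (k - G x)‖ < η := by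
    intro η hη
    obtain ⟨aseq, vseq, hpos, ha0, hv, hmem⟩ := hh
    obtain ⟨n, hn⟩ := (hv.eventually (Metric.ball_mem_nhds (A h) hη)).exists
    refine ⟨1/aseq n, G x + aseq n • vseq n, by have := hpos n; positivity, hmem n, ?_⟩
    have hrw : (1/aseq n) • (G x + aseq n • vseq n - G x) = vseq n := by
      rw [add_sub_cancel_left, one_div, inv_smul_smul₀ (hpos n).ne']
    rw [hrw]
    have := Metric.mem_ball.1 hn
    rwa [dist_eq_norm, norm_sub_rev] at this
  have hexact : ∀ η : ℝ, 0 < η → ∃ (h' : EuclideanSpace ℝ (Fin d)) (σ : ℝ) (k : Y), 0 ≤ σ ∧ k ∈ K ∧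
      ‖h' - h‖ ≤ η ∧ A h' = σ • (k - G x) := by
    intro η hη
    obtain ⟨σ, k, hσ, hk, hclose⟩ := happrox (ρ*η/M) (by positivity)
    set τ : ℝ := η/M with hτ
    have hτpos : 0 < τ := by positivity
    set w : Y := (-(1/τ)) • (A h - σ • (k - G x)) with hw
    have hwnorm : ‖w‖ < ρ := by
      rw [hw, norm_smul, Real.norm_eq_abs, abs_neg, abs_of_pos (by positivity)]
      have h1 : (1/τ) * ‖A h - σ • (k - G x)‖ < (1/τ) * (ρ*η/M) :=
        mul_lt_mul_of_pos_left hclose (by positivity)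
      have h2 : (1/τ) * (ρ*η/M) = ρ := by rw [hτ]; field_simp
      linarith
    obtain ⟨g, k', hg, hk', hk'n, hweq⟩ := hE w hwnorm
    have hστ : 0 < σ + τ := by linarith
    refine ⟨h + τ•g, σ + τ, (σ/(σ+τ))•k + (τ/(σ+τ))•k', by positivity,
      hKconv hk hk' (by positivity) (by positivity) (by field_simp), ?_, ?_⟩
    · have : h + τ•g - h = τ•g := by abel
      rw [this, norm_smul, Real.norm_eq_abs, abs_of_pos hτpos]
      have h2 : τ*‖g‖ ≤ τ*M := mul_le_mul_of_nonneg_left hg hτpos.le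
      have h3 : τ*M = η := by rw [hτ]; field_simp
      linarith
    · have hAg : A g = w + k' - G x := by rw [hweq]; abel
      have hτw : τ • w = -(A h - σ • (k - G x)) := by
        rw [hw, smul_smul]
        have hcc : τ * (-(1/τ)) = -1 := by field_simp
        rw [hcc, neg_one_smul]
      have hcomb : (σ+τ) • ((σ/(σ+τ))•k + (τ/(σ+τ))•k') = σ•k + τ•k' := by
        rw [smul_add, smul_smul, smul_smul, mul_div_cancel₀ _ hστ.ne', mul_div_cancel₀ _ hστ.ne']
      have hAh' : A (h + τ•g) = σ•k + τ•k' - (σ+τ)•G x := by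
        rw [map_add, map_smul, hAg]
        have hexp : τ • (w + k' - G x) = τ•w + τ•k' - τ•G x := by module
        rw [hexp, hτw]
        module
      rw [hAh', smul_sub, hcomb]
  have hclosed := contingentCone_isClosed {z | G z ∈ K} x
  have hseq : ∀ n : ℕ, ∃ h', ‖h' - h‖ ≤ 1/((n:ℝ)+1) ∧
      h' ∈ contingentCone {z | G z ∈ K} x := by
    intro n
    obtain ⟨h', σ, k, hσ, hk, hd, hA'⟩ := hexact (1/((n:ℝ)+1)) (by positivity)
    exact ⟨h', hd, mem_contingent_of_S K hKcl hKconv hKcone G hG x hxK hρ hM hE h' hσ hk hA'⟩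
  choose hs hd hmem using hseq
  have htends : Tendsto hs atTop (𝓝 h) := by
    rw [tendsto_iff_norm_sub_tendsto_zero]
    exact squeeze_zero (fun n => norm_nonneg _) hd tendsto_one_div_add_atTop_nhds_zero_nat
  exact hclosed.mem_of_tendsto htends (Filter.Eventually.of_forall hmem)

lemma contingent_subset_linearized
    (K : Set Y) (G : EuclideanSpace ℝ (Fin d) → Y) (hG : ContDiff ℝ 1 G)
    (x : EuclideanSpace ℝ (Fin d))
    (h : EuclideanSpace ℝ (Fin d)) (hh : h ∈ contingentCone {z | G z ∈ K} x) :
    fderiv ℝ G x h ∈ contingentCone K (G x) := by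
  set A : EuclideanSpace ℝ (Fin d) →L[ℝ] Y := fderiv ℝ G x with hA
  obtain ⟨aseq, vseq, hpos, ha0, hv, hmem⟩ := hh
  set r : ℕ → Y := fun n =>
    (1/aseq n) • (G (x + aseq n • vseq n) - G x - A (aseq n • vseq n)) with hr
  have hvbd : ∀ᶠ n in atTop, ‖vseq n‖ ≤ ‖h‖ + 1 := by
    filter_upwards [hv.eventually (Metric.ball_mem_nhds h one_pos)] with n hn
    have h1 : ‖vseq n - h‖ < 1 := by rw [← dist_eq_norm]; exact hn
    have h2 := norm_add_le h (vseq n - h)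
    simp only [add_sub_cancel] at h2
    linarith
  have hu0 : Tendsto (fun n => aseq n • vseq n) atTop (𝓝 0) := by
    have := ha0.smul hv
    simpa using this
  have hrtend : Tendsto r atTop (𝓝 0) := by
    refine Metric.tendsto_nhds.2 (fun ε hε => ?_)
    have hc : 0 < ε/(2*(‖h‖+1)) := by positivity
    have hol := (hasFDerivAt_iff_isLittleO_nhds_zero.1
      ((hG.differentiable one_ne_zero) x).hasFDerivAt).def hc
    obtain ⟨δ', hδ'pos, hδ'⟩ := Metric.eventually_nhds_iff.1 hol
    have huev : ∀ᶠ n in atTop, dist (aseq n • vseq n) 0 < δ' :=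
      hu0.eventually (Metric.ball_mem_nhds 0 hδ'pos)
    filter_upwards [hvbd, huev] with n hbn hun
    rw [dist_zero_right]
    have h3 := hδ' hun
    have h4 : ‖r n‖ = (1/aseq n) * ‖G (x + aseq n • vseq n) - G x - A (aseq n • vseq n)‖ := by
      rw [hr, norm_smul, Real.norm_eq_abs, abs_of_pos (by have := hpos n; positivity)]
    have h5 : ‖aseq n • vseq n‖ = aseq n * ‖vseq n‖ := by
      rw [norm_smul, Real.norm_eq_abs, abs_of_pos (hpos n)]
    have h6 : (1/aseq n) * ((ε/(2*(‖h‖+1))) * (aseq n * ‖vseq n‖)) =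
        (ε/(2*(‖h‖+1))) * ‖vseq n‖ := by
      have han := (hpos n).ne'
      field_simp
    have h7 : ‖r n‖ ≤ (ε/(2*(‖h‖+1))) * ‖vseq n‖ := by
      rw [h4, ← h6]
      refine mul_le_mul_of_nonneg_left ?_ (by have := hpos n; positivity)
      rw [← h5]
      exact h3
    have h8 : (ε/(2*(‖h‖+1))) * ‖vseq n‖ ≤ (ε/(2*(‖h‖+1))) * (‖h‖+1) :=
      mul_le_mul_of_nonneg_left hbn (by positivity)
    have h9 : (ε/(2*(‖h‖+1))) * (‖h‖+1) = ε/2 := by field_simp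
    linarith
  refine ⟨aseq, fun n => (1/aseq n) • (G (x + aseq n • vseq n) - G x), hpos, ha0, ?_, ?_⟩
  · have hsplit : ∀ n, (1/aseq n) • (G (x + aseq n • vseq n) - G x) = r n + A (vseq n) := by
      intro n
      rw [hr]
      have : A (vseq n) = (1/aseq n) • A (aseq n • vseq n) := by
        rw [map_smul, smul_smul, one_div, inv_mul_cancel₀ (hpos n).ne', one_smul]
      rw [this, ← smul_add]
      congr 1
      abel
    have hlim2 : Tendsto (fun n => r n + A (vseq n)) atTop (𝓝 (0 + A h)) :=
      hrtend.add ((A.continuous.tendsto _).comp hv)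
    rw [zero_add] at hlim2
    exact hlim2.congr (fun n => (hsplit n).symm)
  · intro n
    have : aseq n • (1/aseq n) • (G (x + aseq n • vseq n) - G x) =
        G (x + aseq n • vseq n) - G x := by
      rw [one_div, smul_inv_smul₀ (hpos n).ne']
    rw [this, add_sub_cancel]
    exact hmem n

end Correction

theorem calN_subset_polar_and_eq_normalCone
    {d : ℕ} {Y : Type*} [NormedAddCommGroup Y] [NormedSpace ℝ Y] [CompleteSpace Y]
    (K : Set Y) (G : EuclideanSpace ℝ (Fin d) → Y)
    (hKne : K.Nonempty) (hKcl : IsClosed K) (hKconv : Convex ℝ K)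
    (hKcone : ∀ (c : ℝ), 0 ≤ c → ∀ y ∈ K, c • y ∈ K)
    (hG : ContDiff ℝ 1 G)
    (x : EuclideanSpace ℝ (Fin d)) (hxK : G x ∈ K) :
    calN G K x ⊆ polarCone {h | fderiv ℝ G x h ∈ contingentCone K (G x)} ∧
    ((0 : Y) ∈ interior {y | ∃ h : EuclideanSpace ℝ (Fin d), ∃ k ∈ K,
        y = G x + fderiv ℝ G x h - k} →
      calN G K x = polarCone {h | fderiv ℝ G x h ∈ contingentCone K (G x)} ∧
      calN G K x = polarCone (contingentCone {z | G z ∈ K} x) ∧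
      calN G K x = normalCone {z | G z ∈ K} x) := by
  have hK0 : (0:Y) ∈ K := by
    obtain ⟨y, hy⟩ := hKne
    simpa using hKcone 0 le_rfl y hy
  have part1 : calN G K x ⊆ polarCone {h | fderiv ℝ G x h ∈ contingentCone K (G x)} := by
    rintro v ⟨l, hlK, hlb, hrep⟩ h hh
    rw [hrep h]
    obtain ⟨aseq, vseq, hpos, ha0, hv, hmem⟩ := hh
    have hlv : ∀ n, l (vseq n) ≤ 0 := by
      intro n
      have h1 := hlK _ (hmem n)
      rw [map_add, map_smul, hlb, smul_eq_mul, zero_add] at h1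
      nlinarith [hpos n]
    have hlim : Tendsto (fun n => l (vseq n)) atTop (𝓝 (l (fderiv ℝ G x h))) :=
      (l.continuous.tendsto _).comp hv
    exact le_of_tendsto hlim (Filter.Eventually.of_forall hlv)
  refine ⟨part1, fun hCQ => ?_⟩
  obtain ⟨ρ, hρ, M, hM, hE⟩ :=
    openness_of_CQ K hKcl hKconv hK0 (fderiv ℝ G x) (G x) hCQ
  have heq1 : calN G K x = polarCone {h | fderiv ℝ G x h ∈ contingentCone K (G x)} := by
    refine Set.Subset.antisymm part1 (fun v hv => ?_)
    obtain ⟨l, h1, h2, h3⟩ := polar_subset_rep K hKconv hKcone hK0 (fderiv ℝ G x) hxK hρ hM hE hv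
    exact ⟨l, h1, h2, h3⟩
  have heq2 : contingentCone {z | G z ∈ K} x = {h | fderiv ℝ G x h ∈ contingentCone K (G x)} := by
    refine Set.Subset.antisymm (fun h hh => ?_) (fun h hh => ?_)
    · exact contingent_subset_linearized K G hG x h hh
    · exact linearized_subset_contingent K hKcl hKconv hKcone G hG x hxK hρ hM hE h hh
  refine ⟨heq1, ?_, ?_⟩
  · rw [heq2]; exact heq1
  · show calN G K x = polarCone (contingentCone {z | G z ∈ K} x)
    rw [heq2]; exact heq1
end
end

section
/- Let x* be a feasible point of the problem (P). Then: (1) a Lagrange multiplier of (P) at x* exists if and only if 0 ∈ 𝒟(x*) = ∂F(x*) + 𝒩(x*) + N_A(x*); (2) the sufficient optimality condition — max_{ω∈W(x*)} ⟨∇ₓf(x*,ω), h⟩ > 0 for every h ∈ T_A(x*)\{0} with DG(x*)h ∈ T_K(G(x*)) — holds at x* if and only if 0 ∈ int 𝒟(x*). -/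
open Set Filter Topology Pointwise
open scoped RealInnerProductSpace

noncomputable section

variable {d : ℕ} {W : Type*} [TopologicalSpace W]
variable {Y : Type*} [NormedAddCommGroup Y] [NormedSpace ℝ Y]

/-!
Statement 7: for a feasible point x* of (P), with 𝒟(x*) = ∂F(x*) + 𝒩(x*) + N_A(x*):
(1) a Lagrange multiplier of (P) at x* exists iff 0 ∈ 𝒟(x*);
(2) the sufficient optimality condition (max_{ω∈W(x*)} ⟨∇ₓf(x*,ω), h⟩ > 0 for every nonzero
h ∈ T_A(x*) with DG(x*)h ∈ T_K(G(x*))) holds iff 0 ∈ int 𝒟(x*).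
-/

section ConeLemmas
variable {X : Type*} [NormedAddCommGroup X] [NormedSpace ℝ X] {C : Set X} {x : X}

lemma zero_mem_contingentCone (hx : x ∈ C) : (0 : X) ∈ contingentCone C x := by
  refine ⟨fun n => 1 / (n + 1), fun _ => 0, fun n => by positivity,
    tendsto_one_div_add_atTop_nhds_zero_nat, tendsto_const_nhds, fun n => by simpa using hx⟩

lemma smul_sub_mem_contingentCone_s7 (hC : Convex ℝ C) (hx : x ∈ C) {c : ℝ} (hc : 0 ≤ c)
    {y : X} (hy : y ∈ C) : c • (y - x) ∈ contingentCone C x := by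
  refine ⟨fun n => (1 / (n + 1)) * (c + 1)⁻¹, fun _ => c • (y - x), fun n => by positivity,
    ?_, tendsto_const_nhds, fun n => ?_⟩
  · have := tendsto_one_div_add_atTop_nhds_zero_nat.mul_const (c + 1)⁻¹
    simpa using this
  · set t : ℝ := ((1 / (n + 1)) * (c + 1)⁻¹) * c with ht
    have h0 : (0:ℝ) ≤ t := by positivity
    have h1 : t ≤ 1 := by
      have hn : (1 : ℝ) / (n + 1) ≤ 1 := by
        rw [div_le_one (by positivity)]; linarith [Nat.cast_nonneg (α := ℝ) n]
      have hcc : (c + 1)⁻¹ * c ≤ 1 := by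
        rw [inv_mul_le_iff₀ (by linarith)]; linarith
      calc t = (1 / (n + 1)) * ((c + 1)⁻¹ * c) := by ring
        _ ≤ 1 * 1 := by
            apply mul_le_mul hn hcc (by positivity) zero_le_one
        _ = 1 := by ring
    have : x + ((1 / (↑n + 1)) * (c + 1)⁻¹) • c • (y - x) = (1 - t) • x + t • y := by
      rw [smul_smul, ← ht]
      module
    rw [this]
    exact hC hx hy (by linarith) h0 (by ring)

lemma isClosed_contingentCone : IsClosed (contingentCone C x) := by
  refine isClosed_of_closure_subset (fun h hcl => ?_)
  have H : ∀ m : ℕ, ∃ (am : ℝ) (vm : X), 0 < am ∧ am < 1/(m+1) ∧ dist vm h < 2/(m+1) ∧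
      x + am • vm ∈ C := by
    intro m
    have hpos : (0:ℝ) < 1/(m+1) := by positivity
    obtain ⟨hm, hhm, hdist⟩ := Metric.mem_closure_iff.mp hcl (1/(m+1)) hpos
    obtain ⟨a, v, hp, ha, hv, hmem⟩ := hhm
    have h1 : ∀ᶠ n in atTop, a n < 1/(m+1) := ha.eventually (gt_mem_nhds hpos)
    have h2 : ∀ᶠ n in atTop, dist (v n) hm < 1/(m+1) :=
      hv.eventually (Metric.ball_mem_nhds hm hpos)
    obtain ⟨n, hn1, hn2⟩ := (h1.and h2).exists
    refine ⟨a n, v n, hp n, hn1, ?_, hmem n⟩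
    calc dist (v n) h ≤ dist (v n) hm + dist hm h := dist_triangle _ _ _
      _ < 1/(m+1) + 1/(m+1) := by rw [dist_comm hm h]; exact add_lt_add hn2 hdist
      _ = 2/(m+1) := by ring
  choose am vm h1 h2 h3 h4 using H
  refine ⟨am, vm, h1, ?_, ?_, h4⟩
  · exact squeeze_zero (fun n => (h1 n).le) (fun n => (h2 n).le)
      tendsto_one_div_add_atTop_nhds_zero_nat
  · rw [tendsto_iff_dist_tendsto_zero]
    refine squeeze_zero (fun n => dist_nonneg) (fun n => (h3 n).le) ?_
    have := tendsto_one_div_add_atTop_nhds_zero_nat.const_mul (2:ℝ)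
    simpa [div_eq_mul_inv, mul_comm] using this

lemma contingentCone_subset_closure :
    contingentCone C x ⊆ closure {w : X | ∃ c : ℝ, 0 ≤ c ∧ ∃ y ∈ C, w = c • (y - x)} := by
  rintro h ⟨a, v, hp, _, hv, hmem⟩
  refine mem_closure_of_tendsto hv (Eventually.of_forall fun n => ?_)
  refine ⟨(a n)⁻¹, (inv_pos.2 (hp n)).le, x + a n • v n, hmem n, ?_⟩
  rw [add_sub_cancel_left, smul_smul, inv_mul_cancel₀ (hp n).ne', one_smul]

lemma contingentCone_eq_closure (hC : Convex ℝ C) (hx : x ∈ C) :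
    contingentCone C x = closure {w : X | ∃ c : ℝ, 0 ≤ c ∧ ∃ y ∈ C, w = c • (y - x)} := by
  refine subset_antisymm contingentCone_subset_closure
    (closure_minimal ?_ isClosed_contingentCone)
  rintro w ⟨c, hc, y, hy, rfl⟩
  exact smul_sub_mem_contingentCone_s7 hC hx hc hy

lemma convex_posSpan (hC : Convex ℝ C) (hx : x ∈ C) :
    Convex ℝ {w : X | ∃ c : ℝ, 0 ≤ c ∧ ∃ y ∈ C, w = c • (y - x)} := by
  rintro w1 ⟨c1, hc1, y1, hy1, rfl⟩ w2 ⟨c2, hc2, y2, hy2, rfl⟩ s t hs ht hst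
  rcases eq_or_lt_of_le (by positivity : (0:ℝ) ≤ s * c1 + t * c2) with hzero | hpos
  · refine ⟨0, le_refl _, x, hx, ?_⟩
    have h1 : s * c1 = 0 := by nlinarith [mul_nonneg hs hc1, mul_nonneg ht hc2]
    have h2 : t * c2 = 0 := by nlinarith [mul_nonneg hs hc1, mul_nonneg ht hc2]
    rw [smul_smul, smul_smul, h1, h2]
    simp
  · have hcne : s * c1 + t * c2 ≠ 0 := hpos.ne'
    refine ⟨s * c1 + t * c2, hpos.le,
      (s * c1 / (s * c1 + t * c2)) • y1 + (t * c2 / (s * c1 + t * c2)) • y2, ?_, ?_⟩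
    · exact hC hy1 hy2 (by positivity) (by positivity) (by field_simp)
    · rw [smul_smul, smul_smul]
      match_scalars <;> field_simp <;> try ring

lemma convex_contingentCone (hC : Convex ℝ C) (hx : x ∈ C) :
    Convex ℝ (contingentCone C x) := by
  rw [contingentCone_eq_closure hC hx]
  exact (convex_posSpan hC hx).closure

lemma smul_mem_contingentCone (hC : Convex ℝ C) (hx : x ∈ C) {c : ℝ} (hc : 0 < c) {w : X}
    (hw : w ∈ contingentCone C x) : c • w ∈ contingentCone C x := by
  rw [contingentCone_eq_closure hC hx] at hw ⊢
  have hcont : Continuous fun z : X => c • z := continuous_const_smul c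
  rcases mem_closure_iff_seq_limit.mp hw with ⟨u, hu, hlim⟩
  refine mem_closure_of_tendsto ((hcont.tendsto w).comp hlim)
    (Eventually.of_forall fun n => ?_)
  obtain ⟨c', hc', y, hy, hy'⟩ := hu n
  exact ⟨c * c', by positivity, y, hy, by simp [hy', smul_smul]⟩

end ConeLemmas

section Euc
local notation "E" => EuclideanSpace ℝ (Fin d)

lemma mem_of_polar_le {T : Set E} (hT : Convex ℝ T) (hcl : IsClosed T)
    (h0 : (0:E) ∈ T) (hsmul : ∀ c : ℝ, 0 < c → ∀ w ∈ T, c • w ∈ T) {z : E}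
    (hz : ∀ w ∈ polarCone T, ⟪w, z⟫ ≤ 0) : z ∈ T := by
  let TC : ConvexCone ℝ E :=
    { carrier := T
      smul_mem' := fun {c} hc {w} hw => hsmul c hc w hw
      add_mem' := fun {u} hu {v} hv => by
        have h2 : (1/2 : ℝ) • u + (1/2 : ℝ) • v ∈ T :=
          hT hu hv (by norm_num) (by norm_num) (by norm_num)
        have := hsmul 2 (by norm_num) _ h2
        have he : (2:ℝ) • ((1/2 : ℝ) • u + (1/2 : ℝ) • v) = u + v := by
          rw [smul_add, smul_smul, smul_smul]; norm_num
        rwa [he] at this }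
  by_contra hzT
  obtain ⟨φ, u, hφ1, hφ2⟩ := geometric_hahn_banach_closed_point hT hcl hzT
  have hu : 0 < u := by
    have := hφ1 0 h0
    simpa using this
  have hle : ∀ w ∈ T, φ w ≤ 0 := by
    intro w hw
    by_contra hpos
    push_neg at hpos
    have := hφ1 _ (hsmul ((u+1)/φ w) (by positivity) w hw)
    rw [map_smul, smul_eq_mul, div_mul_cancel₀ _ hpos.ne'] at this
    linarith
  set w0 := (InnerProductSpace.toDual ℝ E).symm φ
  have hw : ∀ v, ⟪w0, v⟫ = φ v := fun v => InnerProductSpace.toDual_symm_apply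
  have hpol : w0 ∈ polarCone T := fun h hh => by rw [hw]; exact hle h hh
  have := hz w0 hpol
  rw [hw] at this
  linarith

lemma isCompact_convexHull_euc {s : Set E} (hs : IsCompact s) (hne : s.Nonempty) :
    IsCompact (convexHull ℝ s) := by
  classical
  obtain ⟨y0, hy0⟩ := hne
  have key : convexHull ℝ s =
      (fun p : (Fin (d+1) → ℝ) × (Fin (d+1) → E) => ∑ i, p.1 i • p.2 i) ''
        (stdSimplex ℝ (Fin (d+1)) ×ˢ Set.univ.pi fun _ => s) := by
    apply Subset.antisymm
    · intro q hq
      obtain ⟨ι, hι, z, w, hzs, hai, hwpos, hwsum, hq'⟩ :=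
        eq_pos_convex_span_of_mem_convexHull hq
      have hcard : Fintype.card ι ≤ d + 1 := by
        have h1 := hai.card_le_finrank_succ
        have h2 : Module.finrank ℝ (vectorSpan ℝ (Set.range z)) ≤ d := by
          have h3 := Submodule.finrank_le (vectorSpan ℝ (Set.range z))
          simpa [finrank_euclideanSpace_fin] using h3
        omega
      obtain ⟨e⟩ : Nonempty (ι ↪ Fin (d+1)) :=
        Function.Embedding.nonempty_of_card_le (by simpa using hcard)
      have hext : ∀ (β : Type) (u : ι → β) (u0 : β) (i : ι),
          Function.extend ⇑e u (fun _ => u0) (e i) = u i := fun β u u0 i =>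
        e.injective.extend_apply _ _ _
      have hsum : ∀ (β : Type) [AddCommMonoid β] (F : Fin (d+1) → β),
          (∀ j, (¬∃ i, e i = j) → F j = 0) → ∑ j, F j = ∑ i, F (e i) := by
        intro β _ F hF
        rw [← Finset.sum_map Finset.univ e F]
        refine (Finset.sum_subset (Finset.subset_univ _) fun j _ hj => hF j ?_).symm
        intro ⟨i, hi⟩
        exact hj (Finset.mem_map.mpr ⟨i, Finset.mem_univ _, hi⟩)
      have h1 : ∀ j, 0 ≤ Function.extend ⇑e w (fun _ => (0:ℝ)) j := by
        intro j
        rcases em (∃ i, e i = j) with ⟨i, rfl⟩ | hnj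
        · rw [hext]; exact (hwpos i).le
        · rw [Function.extend_apply' _ _ _ hnj]
      have h2 : ∑ j, Function.extend ⇑e w (fun _ => (0:ℝ)) j = 1 := by
        rw [hsum ℝ _ (fun j hj => by rw [Function.extend_apply' _ _ _ hj])]
        rw [← hwsum]
        exact Finset.sum_congr rfl fun i _ => hext _ _ _ i
      have h3 : ∀ j, Function.extend ⇑e z (fun _ => y0) j ∈ s := by
        intro j
        rcases em (∃ i, e i = j) with ⟨i, rfl⟩ | hnj
        · rw [hext]; exact hzs ⟨i, rfl⟩
        · rw [Function.extend_apply' _ _ _ hnj]; exact hy0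
      have h4 : ∑ j, Function.extend ⇑e w (fun _ => (0:ℝ)) j •
          Function.extend ⇑e z (fun _ => y0) j = q := by
        rw [hsum E _ (fun j hj => by
          rw [Function.extend_apply' w (fun _ => (0:ℝ)) j hj]; exact zero_smul _ _)]
        rw [← hq']
        exact Finset.sum_congr rfl fun i _ => by rw [hext, hext]
      exact ⟨(Function.extend ⇑e w (fun _ => (0:ℝ)), Function.extend ⇑e z (fun _ => y0)),
        ⟨⟨h1, h2⟩, fun j _ => h3 j⟩, h4⟩
    · rintro q ⟨⟨wv, zv⟩, ⟨hw, hz⟩, rfl⟩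
      exact (convex_convexHull ℝ s).sum_mem (fun i _ => hw.1 i) hw.2
        (fun i _ => subset_convexHull ℝ s (hz i (mem_univ i)))
  rw [key]
  exact ((isCompact_stdSimplex _ _).prod (isCompact_univ_pi fun _ => hs)).image
    (continuous_finset_sum _ fun i _ =>
      (((continuous_apply i).comp continuous_fst).smul ((continuous_apply i).comp continuous_snd)))

lemma exists_separating_of_not_interior {D : Set E}
    (hD : Convex ℝ D) (hne : D.Nonempty) (hint : (0:E) ∉ interior D) :
    ∃ h : E, h ≠ 0 ∧ ∀ v ∈ D, ⟪v, h⟫ ≤ 0 := by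
  by_cases hie : (interior D).Nonempty
  · have hic : (0:E) ∉ interior (closure D) := by
      intro h0
      obtain ⟨p, hp⟩ := hie
      have hp0 : p ≠ 0 := fun hh => hint (hh ▸ hp)
      have hpn : (0:ℝ) < ‖p‖ := norm_pos_iff.mpr hp0
      obtain ⟨ε, hε, hball⟩ := Metric.mem_nhds_iff.mp (mem_interior_iff_mem_nhds.mp h0)
      set t : ℝ := ε / (2 * ‖p‖) with htdef
      have ht : 0 < t := by positivity
      have hz : -(t • p) ∈ closure D := by
        apply hball
        have hnv : ‖-(t • p)‖ = ε / 2 := by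
          rw [norm_neg, norm_smul, Real.norm_eq_abs, abs_of_pos ht, htdef]
          field_simp
        rw [mem_ball_zero_iff, hnv]
        linarith
      have h0seg : (0:E) ∈ openSegment ℝ p (-(t • p)) := by
        refine ⟨t/(1+t), 1/(1+t), by positivity, by positivity, by
          rw [← add_div, add_comm t 1, div_self (by positivity : (0:ℝ) < 1+t).ne'], ?_⟩
        rw [smul_neg, smul_smul]
        have hab : t / (1 + t) = 1 / (1 + t) * t := by ring
        rw [hab, add_neg_cancel]
      exact hint (hD.openSegment_interior_closure_subset_interior hp hz h0seg)
    have hseq : ∀ m : ℕ, ∃ xm : E, ‖xm‖ < 1/(m+1) ∧ xm ∉ closure D := by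
      intro m
      by_contra hcon
      push_neg at hcon
      refine hic (mem_interior.mpr ⟨Metric.ball 0 (1/(m+1)), fun y hy => ?_,
        Metric.isOpen_ball, Metric.mem_ball_self (by positivity)⟩)
      exact hcon y (mem_ball_zero_iff.mp hy)
    choose xm hx1 hx2 using hseq
    obtain ⟨v0, hv0⟩ := hne
    have hsep : ∀ m : ℕ, ∃ hm : E, ‖hm‖ = 1 ∧ ∀ v ∈ D, ⟪hm, v⟫ < 1/(m+1) := by
      intro m
      obtain ⟨φ, u, hφ1, hφ2⟩ := geometric_hahn_banach_closed_point hD.closure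
        isClosed_closure (hx2 m)
      set w := (InnerProductSpace.toDual ℝ E).symm φ with hwdef
      have hw : ∀ v : E, ⟪w, v⟫ = φ v := fun v => InnerProductSpace.toDual_symm_apply
      have hwne : w ≠ 0 := by
        intro hw0
        have e1 : φ v0 < u := hφ1 v0 (subset_closure hv0)
        have e2 : φ v0 = 0 := by rw [← hw v0, hw0, inner_zero_left]
        have e3 : φ (xm m) = 0 := by rw [← hw (xm m), hw0, inner_zero_left]
        rw [e2] at e1; rw [e3] at hφ2; linarith
      have hwn : (0:ℝ) < ‖w‖ := norm_pos_iff.mpr hwne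
      refine ⟨‖w‖⁻¹ • w, by
        rw [norm_smul, Real.norm_eq_abs, abs_of_pos (inv_pos.mpr hwn), inv_mul_cancel₀ hwn.ne'],
        fun v hv => ?_⟩
      have hφv : φ v < φ (xm m) := lt_trans (hφ1 v (subset_closure hv)) hφ2
      calc ⟪‖w‖⁻¹ • w, v⟫ = ‖w‖⁻¹ * φ v := by rw [real_inner_smul_left, hw]
        _ < ‖w‖⁻¹ * φ (xm m) := by
            exact mul_lt_mul_of_pos_left hφv (inv_pos.mpr hwn)
        _ = ⟪‖w‖⁻¹ • w, xm m⟫ := by rw [real_inner_smul_left, hw]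
        _ ≤ ‖‖w‖⁻¹ • w‖ * ‖xm m‖ := real_inner_le_norm _ _
        _ = ‖xm m‖ := by
            rw [norm_smul, Real.norm_eq_abs, abs_of_pos (inv_pos.mpr hwn),
              inv_mul_cancel₀ hwn.ne', one_mul]
        _ < 1/(m+1) := hx1 m
    choose hm hnorm hlt using hsep
    have hsphere : ∀ m, hm m ∈ Metric.sphere (0:E) 1 := fun m => by
      simp [hnorm m]
    obtain ⟨h, hhs, φm, hmono, hconv⟩ := (isCompact_sphere (0:E) 1).tendsto_subseq hsphere
    have hh1 : ‖h‖ = 1 := by simpa using hhs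
    refine ⟨h, fun h0 => by simp [h0] at hh1, fun v hv => ?_⟩
    rw [real_inner_comm]
    have htend : Tendsto (fun k => ⟪hm (φm k), v⟫) atTop (𝓝 ⟪h, v⟫) :=
      (hconv.inner tendsto_const_nhds)
    have hbnd : ∀ k, ⟪hm (φm k), v⟫ ≤ 1/(k+1) := by
      intro k
      have h1 : (⟪hm (φm k), v⟫ : ℝ) < 1/(φm k + 1) := hlt (φm k) v hv
      have h2 : (1:ℝ)/(φm k + 1) ≤ 1/(k+1) := by
        have hk : (k:ℝ) ≤ (φm k : ℝ) := by exact_mod_cast hmono.le_apply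
        exact one_div_le_one_div_of_le (by positivity) (by linarith)
      linarith
    exact le_of_tendsto_of_tendsto' htend tendsto_one_div_add_atTop_nhds_zero_nat hbnd
  · have hspan : affineSpan ℝ D ≠ ⊤ := by
      intro htop
      exact hie (hD.interior_nonempty_iff_affineSpan_eq_top.mpr htop)
    have hAN2 : (affineSpan ℝ D : Set E).Nonempty := (affineSpan_nonempty ℝ).mpr hne
    have hdir : (affineSpan ℝ D).direction ≠ ⊤ := by
      intro htop
      exact hspan ((AffineSubspace.direction_eq_top_iff_of_nonempty hAN2).mp htop)
    have hob : (affineSpan ℝ D).directionᗮ ≠ ⊥ := by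
      intro hbot
      exact hdir (Submodule.orthogonal_eq_bot_iff.mp hbot)
    obtain ⟨h, hhmem, hh0⟩ := Submodule.ne_bot_iff _ |>.mp hob
    obtain ⟨v0, hv0⟩ := hne
    have hconst : ∀ v ∈ D, ⟪v, h⟫ = ⟪v0, h⟫ := by
      intro v hv
      have hdm : v - v0 ∈ (affineSpan ℝ D).direction := by
        have := AffineSubspace.vsub_mem_direction (mem_affineSpan ℝ hv) (mem_affineSpan ℝ hv0)
        simpa using this
      have hz := (Submodule.mem_orthogonal _ h).mp hhmem _ hdm
      rw [inner_sub_left] at hz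
      linarith
    rcases le_or_gt (⟪v0, h⟫ : ℝ) 0 with hc | hc
    · exact ⟨h, hh0, fun v hv => (hconst v hv).le.trans hc⟩
    · refine ⟨-h, neg_ne_zero.2 hh0, fun v hv => ?_⟩
      rw [inner_neg_right, hconst v hv]
      linarith

end Euc

section MaxLemmas
variable [CompactSpace W] [Nonempty W]
variable {f : EuclideanSpace ℝ (Fin d) → W → ℝ} {x : EuclideanSpace ℝ (Fin d)}

lemma activeSet_nonempty (hfc : Continuous fun p : EuclideanSpace ℝ (Fin d) × W => f p.1 p.2) :
    (activeSet f x).Nonempty := by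
  have hc : Continuous (f x) := hfc.comp (continuous_const.prodMk continuous_id)
  have hcomp : IsCompact (range fun ω => f x ω) := isCompact_range hc
  obtain ⟨ω, hω⟩ := hcomp.sSup_mem (range_nonempty _)
  exact ⟨ω, hω⟩

lemma isCompact_activeGrads
    (hfc : Continuous fun p : EuclideanSpace ℝ (Fin d) × W => f p.1 p.2)
    (hfg : Continuous fun p : EuclideanSpace ℝ (Fin d) × W =>
      gradient (fun z => f z p.2) p.1) :
    IsCompact (activeGrads f x) := by
  have hc : Continuous (f x) := hfc.comp (continuous_const.prodMk continuous_id)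
  have hclosed : IsClosed (activeSet f x) := isClosed_eq hc continuous_const
  exact hclosed.isCompact.image (hfg.comp (continuous_const.prodMk continuous_id))

lemma activeGrads_nonempty
    (hfc : Continuous fun p : EuclideanSpace ℝ (Fin d) × W => f p.1 p.2) :
    (activeGrads f x).Nonempty :=
  (activeSet_nonempty hfc).image _

lemma inner_le_Fdir
    (hfc : Continuous fun p : EuclideanSpace ℝ (Fin d) × W => f p.1 p.2)
    (hfg : Continuous fun p : EuclideanSpace ℝ (Fin d) × W =>
      gradient (fun z => f z p.2) p.1)
    (h : EuclideanSpace ℝ (Fin d)) {g : EuclideanSpace ℝ (Fin d)} (hg : g ∈ subdiffF f x) :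
    ⟪g, h⟫ ≤ Fdir f x h := by
  have hcomp : IsCompact ((fun v : EuclideanSpace ℝ (Fin d) => (⟪v, h⟫ : ℝ)) '' activeGrads f x) :=
    (isCompact_activeGrads hfc hfg).image (Continuous.inner continuous_id continuous_const)
  have hbdd := hcomp.bddAbove
  have hlin : IsLinearMap ℝ (fun v : EuclideanSpace ℝ (Fin d) => (⟪v, h⟫ : ℝ)) :=
    ⟨fun a b => inner_add_left a b h, fun c a => by
      rw [real_inner_smul_left, smul_eq_mul]⟩
  have hsub : activeGrads f x ⊆ {g : EuclideanSpace ℝ (Fin d) | ⟪g, h⟫ ≤ Fdir f x h} :=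
    fun v hv => le_csSup hbdd ⟨v, hv, rfl⟩
  exact convexHull_min hsub (convex_halfSpace_le hlin _) hg

lemma Fdir_le
    (hfc : Continuous fun p : EuclideanSpace ℝ (Fin d) × W => f p.1 p.2)
    {h : EuclideanSpace ℝ (Fin d)} {c : ℝ}
    (hc : ∀ v ∈ activeGrads f x, ⟪v, h⟫ ≤ c) : Fdir f x h ≤ c :=
  csSup_le ((activeGrads_nonempty hfc).image _) (by rintro r ⟨v, hv, rfl⟩; exact hc v hv)

end MaxLemmas

section Yside

lemma contlin_nonpos_of_contingent {K : Set Y} {y : Y} {l : Y →L[ℝ] ℝ}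
    (hl : ∀ k ∈ K, l k ≤ 0) (h0 : l y = 0) {w : Y} (hw : w ∈ contingentCone K y) :
    l w ≤ 0 := by
  obtain ⟨a, v, hp, ha, hv, hm⟩ := hw
  have hb : ∀ n, l (v n) ≤ 0 := by
    intro n
    have h1 := hl _ (hm n)
    rw [map_add, h0, map_smul, smul_eq_mul, zero_add] at h1
    by_contra hpos
    push_neg at hpos
    nlinarith [hp n]
  have htd : Tendsto (fun n => l (v n)) atTop (𝓝 (l w)) := (l.continuous.tendsto w).comp hv
  exact le_of_tendsto htd (Eventually.of_forall hb)

lemma mem_contingentK_of_dual {K : Set Y} (hKconv : Convex ℝ K) (hKcl : IsClosed K)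
    (hKcone : ∀ c : ℝ, 0 ≤ c → ∀ y ∈ K, c • y ∈ K) {y : Y} (hyK : y ∈ K) {w : Y}
    (hw : ∀ l : Y →L[ℝ] ℝ, (∀ k ∈ K, l k ≤ 0) → l y = 0 → l w ≤ 0) :
    w ∈ contingentCone K y := by
  by_contra hcon
  rw [contingentCone_eq_closure hKconv hyK] at hcon
  obtain ⟨g, u, hga, hgu⟩ := geometric_hahn_banach_closed_point
    ((convex_posSpan hKconv hyK).closure) isClosed_closure hcon
  have h0mem : (0:Y) ∈ closure {w : Y | ∃ c : ℝ, 0 ≤ c ∧ ∃ k ∈ K, w = c • (k - y)} :=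
    subset_closure ⟨0, le_refl 0, y, hyK, by simp⟩
  have hu : 0 < u := by
    have := hga 0 h0mem
    simpa using this
  have hKneg : ∀ z ∈ {w : Y | ∃ c : ℝ, 0 ≤ c ∧ ∃ k ∈ K, w = c • (k - y)}, g z ≤ 0 := by
    rintro z hz
    by_contra hgz
    push_neg at hgz
    obtain ⟨c, hc, k, hk, rfl⟩ := hz
    have hmem2 : ((u+1)/(g (c • (k - y)))) • (c • (k - y)) ∈
        closure {w : Y | ∃ c : ℝ, 0 ≤ c ∧ ∃ k ∈ K, w = c • (k - y)} := by
      refine subset_closure ⟨(u+1)/(g (c • (k - y))) * c, ?_, k, hk, by rw [smul_smul]⟩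
      have : 0 < (u+1)/(g (c • (k - y))) := by positivity
      positivity
    have h3 := hga _ hmem2
    rw [map_smul, smul_eq_mul, div_mul_cancel₀ _ hgz.ne'] at h3
    linarith
  have hgy_le : ∀ k ∈ K, g k ≤ g y := by
    intro k hk
    have h4 := hKneg ((1:ℝ) • (k - y)) ⟨1, zero_le_one, k, hk, rfl⟩
    rw [one_smul, map_sub] at h4
    linarith
  have hgy0 : g y ≤ 0 := by
    have h2 := hgy_le ((2:ℝ) • y) (hKcone 2 (by norm_num) y hyK)
    rw [map_smul, smul_eq_mul] at h2
    linarith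
  have hgy0' : 0 ≤ g y := by
    have h0K : (0:Y) ∈ K := by
      have := hKcone 0 le_rfl y hyK
      rwa [zero_smul] at this
    have h5 := hgy_le 0 h0K
    rw [map_zero] at h5
    linarith
  have hgK : ∀ k ∈ K, g k ≤ 0 := fun k hk => le_trans (hgy_le k hk) hgy0
  have h6 := hw g hgK (le_antisymm hgy0 hgy0')
  linarith

end Yside

section ConeSets
variable {G : EuclideanSpace ℝ (Fin d) → Y} {K : Set Y} {A : Set (EuclideanSpace ℝ (Fin d))}
  {x : EuclideanSpace ℝ (Fin d)}

lemma zero_mem_calN : (0 : EuclideanSpace ℝ (Fin d)) ∈ calN G K x :=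
  ⟨0, fun y _ => le_of_eq rfl, rfl, fun u => by simp⟩

lemma convex_calN : Convex ℝ (calN G K x) := by
  rintro v1 ⟨l1, hl1, h01, hr1⟩ v2 ⟨l2, hl2, h02, hr2⟩ s t hs ht hst
  refine ⟨s • l1 + t • l2, fun y hy => ?_, by
    simp [ContinuousLinearMap.add_apply, h01, h02], fun u => ?_⟩
  · have e1 := hl1 y hy
    have e2 := hl2 y hy
    simp only [ContinuousLinearMap.add_apply, ContinuousLinearMap.coe_smul', Pi.smul_apply,
      smul_eq_mul]
    nlinarith
  · simp only [inner_add_left, real_inner_smul_left, hr1 u, hr2 u,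
      ContinuousLinearMap.add_apply, ContinuousLinearMap.coe_smul', Pi.smul_apply, smul_eq_mul]

lemma smul_mem_calN {c : ℝ} (hc : 0 ≤ c) {v : EuclideanSpace ℝ (Fin d)}
    (hv : v ∈ calN G K x) : c • v ∈ calN G K x := by
  obtain ⟨l, hl, h0, hr⟩ := hv
  refine ⟨c • l, fun y hy => ?_, by simp [h0], fun u => ?_⟩
  · have := hl y hy
    simp only [ContinuousLinearMap.coe_smul', Pi.smul_apply, smul_eq_mul]
    nlinarith
  · simp only [real_inner_smul_left, hr u, ContinuousLinearMap.coe_smul', Pi.smul_apply,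
      smul_eq_mul]

lemma zero_mem_normalCone : (0 : EuclideanSpace ℝ (Fin d)) ∈ normalCone A x :=
  fun h _ => by simp

lemma convex_normalCone : Convex ℝ (normalCone A x) := by
  rintro z1 h1 z2 h2 s t hs ht hst h hh
  rw [inner_add_left, real_inner_smul_left, real_inner_smul_left]
  nlinarith [h1 h hh, h2 h hh]

lemma smul_mem_normalCone {c : ℝ} (hc : 0 ≤ c) {z : EuclideanSpace ℝ (Fin d)}
    (hz : z ∈ normalCone A x) : c • z ∈ normalCone A x := by
  intro h hh
  rw [real_inner_smul_left]
  nlinarith [hz h hh]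

end ConeSets

theorem optimality_conditions_via_subdifferential
    {d : ℕ} {W : Type*} [TopologicalSpace W] [CompactSpace W] [T2Space W] [Nonempty W]
    {Y : Type*} [NormedAddCommGroup Y] [NormedSpace ℝ Y] [CompleteSpace Y]
    (A : Set (EuclideanSpace ℝ (Fin d))) (K : Set Y)
    (G : EuclideanSpace ℝ (Fin d) → Y) (f : EuclideanSpace ℝ (Fin d) → W → ℝ)
    (hAne : A.Nonempty) (hAcl : IsClosed A) (hAconv : Convex ℝ A)
    (hKne : K.Nonempty) (hKcl : IsClosed K) (hKconv : Convex ℝ K)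
    (hKcone : ∀ (c : ℝ), 0 ≤ c → ∀ y ∈ K, c • y ∈ K)
    (hG : ContDiff ℝ 1 G)
    (hfdiff : ∀ ω, Differentiable ℝ (fun x => f x ω))
    (hfc : Continuous fun p : EuclideanSpace ℝ (Fin d) × W => f p.1 p.2)
    (hfg : Continuous fun p : EuclideanSpace ℝ (Fin d) × W => gradient (fun z => f z p.2) p.1)
    (xs : EuclideanSpace ℝ (Fin d)) (hxA : xs ∈ A) (hxK : G xs ∈ K) :
    ((∃ l : Y →L[ℝ] ℝ, IsLagrangeMult f G K A xs l) ↔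
      (0 : EuclideanSpace ℝ (Fin d)) ∈ subdiffF f xs + calN G K xs + normalCone A xs) ∧
    ((∀ h ∈ contingentCone A xs, h ≠ 0 → fderiv ℝ G xs h ∈ contingentCone K (G xs) →
        0 < Fdir f xs h) ↔
      (0 : EuclideanSpace ℝ (Fin d)) ∈
        interior (subdiffF f xs + calN G K xs + normalCone A xs)) := by
  classical
  have hcalN_pair : ∀ n ∈ calN G K xs, ∀ h : EuclideanSpace ℝ (Fin d),
      fderiv ℝ G xs h ∈ contingentCone K (G xs) → ⟪n, h⟫ ≤ 0 := by
    rintro n ⟨l, hl, h0, hrep⟩ h hh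
    rw [hrep h]
    exact contlin_nonpos_of_contingent hl h0 hh
  have hTAconv := convex_contingentCone hAconv hxA
  have hTAcl : IsClosed (contingentCone A xs) := isClosed_contingentCone
  have hTA0 : (0 : EuclideanSpace ℝ (Fin d)) ∈ contingentCone A xs :=
    zero_mem_contingentCone hxA
  have hTAsmul : ∀ c : ℝ, 0 < c → ∀ w ∈ contingentCone A xs, c • w ∈ contingentCone A xs :=
    fun c hc w hw => smul_mem_contingentCone hAconv hxA hc hw
  have hSne := activeGrads_nonempty (f := f) (x := xs) hfc
  have hScomp := isCompact_activeGrads (f := f) (x := xs) hfc hfg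
  have hsubne : (subdiffF f xs).Nonempty := hSne.mono (subset_convexHull ℝ _)
  refine ⟨⟨?_, ?_⟩, ?_, ?_⟩
  · rintro ⟨l, hl, hl0, hlag⟩
    set n : EuclideanSpace ℝ (Fin d) :=
      (InnerProductSpace.toDual ℝ (EuclideanSpace ℝ (Fin d))).symm
        (l.comp (fderiv ℝ G xs)) with hndef
    have hninner : ∀ u, (⟪n, u⟫ : ℝ) = l (fderiv ℝ G xs u) := fun u => by
      rw [hndef]; exact InnerProductSpace.toDual_symm_apply
    have hnmem : n ∈ calN G K xs := ⟨l, hl, hl0, hninner⟩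
    by_cases hcap : ((subdiffF f xs + {n}) ∩
        (ProperCone.innerDual (contingentCone A xs) : Set (EuclideanSpace ℝ (Fin d)))).Nonempty
    · obtain ⟨q, hqS, hqD⟩ := hcap
      rw [Set.mem_add] at hqS
      obtain ⟨g, hg, n', hn', hq'⟩ := hqS
      rw [Set.mem_singleton_iff] at hn'
      subst hn'
      subst hq'
      rw [SetLike.mem_coe, ProperCone.mem_innerDual] at hqD
      have hzmem : -(g + n) ∈ normalCone A xs := by
        intro h hh
        rw [inner_neg_left]
        linarith [hqD hh, real_inner_comm (g + n) h]
      have h0eq : (0 : EuclideanSpace ℝ (Fin d)) = (g + n) + -(g + n) :=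
        (add_neg_cancel _).symm
      rw [h0eq]
      exact Set.add_mem_add (Set.add_mem_add hg hnmem) hzmem
    · exfalso
      have hdisj : Disjoint (subdiffF f xs + {n})
          (ProperCone.innerDual (contingentCone A xs) : Set (EuclideanSpace ℝ (Fin d))) :=
        Set.disjoint_iff_inter_eq_empty.mpr (Set.not_nonempty_iff_eq_empty.mp hcap)
      have hScomp' : IsCompact (subdiffF f xs + {n}) :=
        (isCompact_convexHull_euc hScomp hSne).add isCompact_singleton
      have hSconv : Convex ℝ (subdiffF f xs + {n}) :=
        (convex_convexHull ℝ _).add (convex_singleton n)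
      obtain ⟨φ, u, v', h1, h2, h3⟩ := geometric_hahn_banach_compact_closed hSconv hScomp'
        (ProperCone.convex _) (ProperCone.isClosed _) hdisj
      set h0 : EuclideanSpace ℝ (Fin d) :=
        (InnerProductSpace.toDual ℝ (EuclideanSpace ℝ (Fin d))).symm φ with hh0def
      have hφ : ∀ w : EuclideanSpace ℝ (Fin d), (⟪h0, w⟫ : ℝ) = φ w := fun w => by
        rw [hh0def]; exact InnerProductSpace.toDual_symm_apply
      have h0dual : (0 : EuclideanSpace ℝ (Fin d)) ∈
          (ProperCone.innerDual (contingentCone A xs) : Set (EuclideanSpace ℝ (Fin d))) := by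
        rw [SetLike.mem_coe, ProperCone.mem_innerDual]
        intro x _
        rw [inner_zero_right]
      have hv'neg : v' < 0 := by
        have := h3 0 h0dual
        simpa using this
      have hφpos : ∀ b ∈ (ProperCone.innerDual (contingentCone A xs) :
          Set (EuclideanSpace ℝ (Fin d))), 0 ≤ φ b := by
        intro b hb
        by_contra hneg
        push_neg at hneg
        have hsm : ((v' - 1)/(φ b)) • b ∈ (ProperCone.innerDual (contingentCone A xs) :
            Set (EuclideanSpace ℝ (Fin d))) := by
          rw [SetLike.mem_coe]
          exact ProperCone.smul_mem _ hb (div_pos_of_neg_of_neg (by linarith) hneg).le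
        have h6 := h3 _ hsm
        rw [map_smul, smul_eq_mul, div_mul_cancel₀ _ hneg.ne] at h6
        linarith
      have hh0T : h0 ∈ contingentCone A xs := by
        apply mem_of_polar_le hTAconv hTAcl hTA0 hTAsmul
        intro w hw
        have hwD : -w ∈ (ProperCone.innerDual (contingentCone A xs) :
            Set (EuclideanSpace ℝ (Fin d))) := by
          rw [SetLike.mem_coe, ProperCone.mem_innerDual]
          intro u' hu'
          rw [inner_neg_right]
          linarith [real_inner_comm u' w, hw u' hu']
        have h5 := hφpos _ hwD
        rw [← hφ, inner_neg_right] at h5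
        linarith [real_inner_comm w h0]
      have hFb : Fdir f xs h0 ≤ u - ⟪n, h0⟫ := by
        apply Fdir_le hfc
        intro v hv
        have hmemS : v + n ∈ subdiffF f xs + {n} :=
          Set.add_mem_add (subset_convexHull ℝ _ hv) (Set.mem_singleton n)
        have h7 := h1 _ hmemS
        rw [← hφ, inner_add_right] at h7
        linarith [real_inner_comm v h0, real_inner_comm n h0]
      have hlag0 := hlag h0 hh0T
      rw [← hninner h0] at hlag0
      linarith
  · intro hmem
    rw [Set.mem_add] at hmem
    obtain ⟨p, hp, z, hz, hpz⟩ := hmem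
    rw [Set.mem_add] at hp
    obtain ⟨g, hg, n, hn, rfl⟩ := hp
    obtain ⟨l, hl, hl0, hrep⟩ := hn
    refine ⟨l, hl, hl0, fun h hh => ?_⟩
    have h1 := inner_le_Fdir hfc hfg h hg
    have h3 : (⟪z, h⟫ : ℝ) ≤ 0 := hz h hh
    have h4 : (⟪g, h⟫ : ℝ) + ⟪n, h⟫ + ⟪z, h⟫ = 0 := by
      rw [← inner_add_left, ← inner_add_left, hpz, inner_zero_left]
    rw [← hrep h]
    linarith
  · intro hsuff
    by_contra hint
    have hDconv : Convex ℝ (subdiffF f xs + calN G K xs + normalCone A xs) :=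
      ((convex_convexHull ℝ _).add convex_calN).add convex_normalCone
    obtain ⟨g0, hg0⟩ := hsubne
    have hmemD : ∀ g ∈ subdiffF f xs, ∀ nn ∈ calN G K xs, ∀ z ∈ normalCone A xs,
        g + nn + z ∈ subdiffF f xs + calN G K xs + normalCone A xs :=
      fun g hg nn hn z hz => Set.add_mem_add (Set.add_mem_add hg hn) hz
    have hDne : (subdiffF f xs + calN G K xs + normalCone A xs).Nonempty :=
      ⟨g0 + 0 + 0, hmemD g0 hg0 0 zero_mem_calN 0 zero_mem_normalCone⟩
    obtain ⟨h, hne0, hpolar⟩ := exists_separating_of_not_interior hDconv hDne hint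
    have hzb : ∀ z ∈ normalCone A xs, (⟪z, h⟫ : ℝ) ≤ 0 := by
      intro z hz
      by_contra hpos
      push_neg at hpos
      have ht : (0:ℝ) ≤ (|⟪g0, h⟫| + 1)/⟪z, h⟫ := by positivity
      have hmem := hmemD g0 hg0 0 zero_mem_calN _ (smul_mem_normalCone ht hz)
      have h8 := hpolar _ hmem
      rw [inner_add_left, inner_add_left, inner_zero_left, real_inner_smul_left,
        div_mul_cancel₀ _ hpos.ne'] at h8
      linarith [neg_abs_le (⟪g0, h⟫ : ℝ)]
    have hnb : ∀ nn ∈ calN G K xs, (⟪nn, h⟫ : ℝ) ≤ 0 := by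
      intro nn hn
      by_contra hpos
      push_neg at hpos
      have ht : (0:ℝ) ≤ (|⟪g0, h⟫| + 1)/⟪nn, h⟫ := by positivity
      have hmem := hmemD g0 hg0 _ (smul_mem_calN ht hn) 0 zero_mem_normalCone
      have h8 := hpolar _ hmem
      rw [inner_add_left, inner_add_left, inner_zero_left, real_inner_smul_left,
        div_mul_cancel₀ _ hpos.ne'] at h8
      linarith [neg_abs_le (⟪g0, h⟫ : ℝ)]
    have hgb : ∀ g ∈ subdiffF f xs, (⟪g, h⟫ : ℝ) ≤ 0 := by
      intro g hg
      have h8 := hpolar _ (hmemD g hg 0 zero_mem_calN 0 zero_mem_normalCone)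
      simpa using h8
    have hhT : h ∈ contingentCone A xs :=
      mem_of_polar_le hTAconv hTAcl hTA0 hTAsmul hzb
    have hFd : Fdir f xs h ≤ 0 :=
      Fdir_le hfc (fun v hv => hgb v (subset_convexHull ℝ _ hv))
    have hDG : fderiv ℝ G xs h ∈ contingentCone K (G xs) := by
      apply mem_contingentK_of_dual hKconv hKcl hKcone hxK
      intro l hl hl0
      have hnn : (InnerProductSpace.toDual ℝ (EuclideanSpace ℝ (Fin d))).symm
          (l.comp (fderiv ℝ G xs)) ∈ calN G K xs :=
        ⟨l, hl, hl0, fun u => InnerProductSpace.toDual_symm_apply⟩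
      have h9 := hnb _ hnn
      rwa [show (⟪(InnerProductSpace.toDual ℝ (EuclideanSpace ℝ (Fin d))).symm
          (l.comp (fderiv ℝ G xs)), h⟫ : ℝ) = l (fderiv ℝ G xs h) from
        InnerProductSpace.toDual_symm_apply] at h9
    exact absurd (hsuff h hhT hne0 hDG) (not_lt.2 hFd)
  · intro hint h hh hne0 hK
    obtain ⟨ε, hε, hball⟩ := Metric.mem_nhds_iff.mp (mem_interior_iff_mem_nhds.mp hint)
    have hhn : (0:ℝ) < ‖h‖ := norm_pos_iff.mpr hne0
    have hvD : (ε/(2*‖h‖)) • h ∈ subdiffF f xs + calN G K xs + normalCone A xs := by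
      apply hball
      rw [mem_ball_zero_iff, norm_smul, Real.norm_eq_abs, abs_of_pos (by positivity)]
      have he : ε/(2*‖h‖)*‖h‖ = ε/2 := by field_simp
      rw [he]
      linarith
    rw [Set.mem_add] at hvD
    obtain ⟨p, hp, z, hz, hpz⟩ := hvD
    rw [Set.mem_add] at hp
    obtain ⟨g, hg, nn, hn, rfl⟩ := hp
    have h1 := inner_le_Fdir hfc hfg h hg
    have h2 : (⟪nn, h⟫ : ℝ) ≤ 0 := hcalN_pair nn hn h hK
    have h3 : (⟪z, h⟫ : ℝ) ≤ 0 := hz h hh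
    have h4 : (⟪g, h⟫ : ℝ) + ⟪nn, h⟫ + ⟪z, h⟫ = ⟪(ε/(2*‖h‖)) • h, h⟫ := by
      rw [← inner_add_left, ← inner_add_left, hpz]
    have h5 : (0:ℝ) < ⟪(ε/(2*‖h‖)) • h, h⟫ := by
      rw [real_inner_smul_left, real_inner_self_eq_norm_sq]
      exact mul_pos (div_pos hε (by positivity)) (pow_pos hhn 2)
    linarith
end
end
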